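/- arXiv:2504.01642 — 6 statements merged into one kernel-verified Lean document; each statement's English description precedes it below -/
import Mathlib

section
/- Every (n,d,λ)-graph with n ≥ 2 satisfies λ ≥ √(d·(n−d)/(n−1)). -/
open SimpleGraph

lemma adjMatrix_isHermitian {V : Type} [Fintype V] [DecidableEq V]
    (G : SimpleGraph V) [DecidableRel G.Adj] : (G.adjMatrix ℝ).IsHermitian := by
  rw [Matrix.IsHermitian, Matrix.conjTranspose_eq_transpose_of_trivial]
  exact G.isSymm_adjMatrix

lemma trace_sq_eq_sum_eigenvalues_sq {n : Type} [Fintype n] [DecidableEq n]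
    (A : Matrix n n ℝ) (hA : A.IsHermitian) :
    (A * A).trace = ∑ i, (hA.eigenvalues i)^2 := by
  conv_lhs => rw [hA.spectral_theorem]
  set U := (Matrix.IsHermitian.eigenvectorUnitary hA : Matrix n n ℝ)
  set D : Matrix n n ℝ := Matrix.diagonal (RCLike.ofReal ∘ hA.eigenvalues)
  have hU : star U * U = 1 :=
    (Matrix.mem_unitaryGroup_iff').mp (Matrix.IsHermitian.eigenvectorUnitary hA).2
  have : (U * D * star U) * (U * D * star U) = U * (D * D) * star U := by
    simp only [mul_assoc]
    rw [← mul_assoc (star U) U, hU, one_mul]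
  rw [Unitary.conjStarAlgAut_apply, this, Matrix.trace_mul_cycle, ← mul_assoc, hU, one_mul,
    Matrix.diagonal_mul_diagonal, Matrix.trace_diagonal]
  simp [sq]

/-- `G` is an `(n,d,λ)`-graph: `n` vertices, `d`-regular, and all adjacency-matrix
eigenvalues except the largest one `d` are at most `λ` in absolute value. -/
def IsNDLGraph (n d : ℕ) (lam : ℝ) {V : Type*} [Fintype V] [DecidableEq V]
    (G : SimpleGraph V) [DecidableRel G.Adj] : Prop :=
  Fintype.card V = n ∧ G.IsRegularOfDegree d ∧
    ∀ hA : (G.adjMatrix ℝ).IsHermitian,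
      ∃ i₀ : V, hA.eigenvalues i₀ = (d : ℝ) ∧
        ∀ i : V, i ≠ i₀ → |hA.eigenvalues i| ≤ lam

/-- Lemma 2.4(1): every `(n,d,λ)`-graph with `n ≥ 2` satisfies
`λ ≥ √(d(n−d)/(n−1))`. -/
theorem ndl_lower_bound_on_lambda (n d : ℕ) (lam : ℝ)
    (V : Type) [Fintype V] [DecidableEq V] (G : SimpleGraph V) [DecidableRel G.Adj]
    (hG : IsNDLGraph n d lam G) (hn : 2 ≤ n) :
    Real.sqrt ((d : ℝ) * ((n : ℝ) - (d : ℝ)) / ((n : ℝ) - 1)) ≤ lam := by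
  obtain ⟨hcard, hreg, hspec⟩ := hG
  have hA := adjMatrix_isHermitian G
  obtain ⟨i₀, hi₀, hbound⟩ := hspec hA
  -- trace of A² is n*d
  have htr : (G.adjMatrix ℝ * G.adjMatrix ℝ).trace = (n : ℝ) * d := by
    rw [Matrix.trace]
    have : ∀ i : V, (G.adjMatrix ℝ * G.adjMatrix ℝ).diag i = (d : ℝ) := by
      intro i
      rw [Matrix.diag_apply, SimpleGraph.adjMatrix_mul_self_apply_self, hreg i]
    rw [Finset.sum_congr rfl (fun i _ => this i), Finset.sum_const, Finset.card_univ, hcard]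
    simp [mul_comm]
  have hsum : ∑ i, (hA.eigenvalues i)^2 = (n : ℝ) * d := by
    rw [← trace_sq_eq_sum_eigenvalues_sq _ hA, htr]
  -- split off i₀
  have hsplit : ∑ i ∈ Finset.univ.erase i₀, (hA.eigenvalues i)^2
      = (n : ℝ) * d - (d : ℝ)^2 := by
    have := Finset.add_sum_erase Finset.univ (fun i => (hA.eigenvalues i)^2)
      (Finset.mem_univ i₀)
    rw [hsum] at this
    simp only [hi₀] at this
    linarith
  -- lam ≥ 0
  have hexists : ∃ j : V, j ≠ i₀ := by
    have h2 : 1 < Fintype.card V := by omega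
    obtain ⟨j, hj⟩ := Fintype.exists_ne_of_one_lt_card h2 i₀
    exact ⟨j, hj⟩
  obtain ⟨j, hj⟩ := hexists
  have hlam0 : 0 ≤ lam := le_trans (abs_nonneg _) (hbound j hj)
  -- each term bounded by lam²
  have hle : ∑ i ∈ Finset.univ.erase i₀, (hA.eigenvalues i)^2
      ≤ ((n : ℝ) - 1) * lam^2 := by
    have hbd : ∀ i ∈ Finset.univ.erase i₀, (hA.eigenvalues i)^2 ≤ lam^2 := by
      intro i hi
      have := hbound i (Finset.ne_of_mem_erase hi)
      calc (hA.eigenvalues i)^2 = |hA.eigenvalues i|^2 := (sq_abs _).symm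
        _ ≤ lam^2 := by
            apply pow_le_pow_left₀ (abs_nonneg _) this
    calc ∑ i ∈ Finset.univ.erase i₀, (hA.eigenvalues i)^2
        ≤ ∑ _i ∈ Finset.univ.erase i₀, lam^2 := Finset.sum_le_sum hbd
      _ = ((n : ℝ) - 1) * lam^2 := by
          rw [Finset.sum_const, Finset.card_erase_of_mem (Finset.mem_univ i₀),
            Finset.card_univ, hcard]
          have hn1 : 1 ≤ n := by omega
          rw [nsmul_eq_mul, Nat.cast_sub hn1]
          push_cast
          ring
  have hnpos : (0 : ℝ) < (n : ℝ) - 1 := by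
    have : (2 : ℝ) ≤ (n : ℝ) := by exact_mod_cast hn
    linarith
  have hdiv : (d : ℝ) * ((n : ℝ) - (d : ℝ)) / ((n : ℝ) - 1) ≤ lam^2 := by
    rw [div_le_iff₀ hnpos]
    nlinarith [hsplit, hle]
  calc Real.sqrt ((d : ℝ) * ((n : ℝ) - (d : ℝ)) / ((n : ℝ) - 1))
      ≤ Real.sqrt (lam^2) := Real.sqrt_le_sqrt hdiv
    _ = lam := by rw [Real.sqrt_sq hlam0]
end

section
/- Let D, k ≥ 1 be reals and let d, λ > 0 satisfy d/λ > kD. Let G be an (n,d,λ)-graph containing a subset X ⊆ V(G) such that every vertex v ∈ V(G) has at least kDλ neighbours in X. Then every subset S ⊆ V(G) with |S| ≤ (k−1)λn/d satisfies |N(S) ∩ X| ≥ (D−1)|S|, where N(S) denotes the external neighbourhood of S, i.e. the set of vertices outside S having a neighbour in S. -/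
set_option linter.unusedSectionVars false
set_option maxHeartbeats 1000000
set_option linter.unusedVariables false


open SimpleGraph

open SimpleGraph Matrix Finset

section aux
variable {V : Type} [Fintype V] [DecidableEq V]

omit [DecidableEq V] in
lemma my_inner_eq_dot (x y : EuclideanSpace ℝ V) :
    @inner ℝ _ _ x y = (x : V → ℝ) ⬝ᵥ (y : V → ℝ) := by
  simp [PiLp.inner_apply, dotProduct, mul_comm]

omit [DecidableEq V] in
lemma my_dot_sum_fn (x : V → ℝ) (f : V → V → ℝ) : x ⬝ᵥ (∑ i, f i) = ∑ i, x ⬝ᵥ f i := by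
  simp [dotProduct, Finset.mul_sum]
  exact Finset.sum_comm

lemma my_spectral_decomp (A : Matrix V V ℝ) (hA : A.IsHermitian) (x y : V → ℝ) :
    x ⬝ᵥ (A *ᵥ y) = ∑ i, hA.eigenvalues i * ((hA.eigenvectorBasis i : V → ℝ) ⬝ᵥ x)
      * ((hA.eigenvectorBasis i : V → ℝ) ⬝ᵥ y) := by
  have hy : ∑ i, ((hA.eigenvectorBasis i : V → ℝ) ⬝ᵥ y) • (hA.eigenvectorBasis i : V → ℝ) = y := by
    have h := hA.eigenvectorBasis.sum_repr' (WithLp.toLp 2 y)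
    simp_rw [my_inner_eq_dot] at h
    simpa using congrArg WithLp.ofLp h
  conv_lhs => rw [← hy]
  have h2 : A *ᵥ (∑ i, ((hA.eigenvectorBasis i : V → ℝ) ⬝ᵥ y) • (hA.eigenvectorBasis i : V → ℝ))
      = ∑ i, ((hA.eigenvectorBasis i : V → ℝ) ⬝ᵥ y)
          • (hA.eigenvalues i • (hA.eigenvectorBasis i : V → ℝ)) := by
    rw [show A *ᵥ (∑ i, ((hA.eigenvectorBasis i : V → ℝ) ⬝ᵥ y) • (hA.eigenvectorBasis i : V → ℝ))
        = A.mulVecLin (∑ i, ((hA.eigenvectorBasis i : V → ℝ) ⬝ᵥ y)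
            • (hA.eigenvectorBasis i : V → ℝ)) from rfl, map_sum]
    refine Finset.sum_congr rfl fun i _ => ?_
    rw [_root_.map_smul, mulVecLin_apply]
    exact congrArg _ (hA.mulVec_eigenvectorBasis i)
  rw [h2, my_dot_sum_fn]
  refine Finset.sum_congr rfl fun i _ => ?_
  rw [dotProduct_smul, dotProduct_smul, dotProduct_comm x]
  simp [smul_eq_mul]; ring

lemma my_parseval (A : Matrix V V ℝ) (hA : A.IsHermitian) (x : V → ℝ) :
    ∑ i, ((hA.eigenvectorBasis i : V → ℝ) ⬝ᵥ x) ^ 2 = x ⬝ᵥ x := by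
  have h := hA.eigenvectorBasis.sum_inner_mul_inner (WithLp.toLp 2 x)
    (WithLp.toLp 2 x)
  simp_rw [my_inner_eq_dot] at h
  calc ∑ i, ((hA.eigenvectorBasis i : V → ℝ) ⬝ᵥ x) ^ 2
      = ∑ i, ((x : V → ℝ) ⬝ᵥ (hA.eigenvectorBasis i : V → ℝ))
        * ((hA.eigenvectorBasis i : V → ℝ) ⬝ᵥ x) := by
        refine Finset.sum_congr rfl fun i _ => ?_
        rw [dotProduct_comm x]; ring
    _ = x ⬝ᵥ x := h

variable (G : SimpleGraph V) [DecidableRel G.Adj]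

lemma my_adj_herm : (G.adjMatrix ℝ).IsHermitian := by
  unfold Matrix.IsHermitian
  ext i j
  simp [Matrix.conjTranspose_apply, G.adj_comm i j]

lemma my_mulVec_one {d : ℕ} (hreg : G.IsRegularOfDegree d) :
    G.adjMatrix ℝ *ᵥ (fun _ => (1 : ℝ)) = (d : ℝ) • (fun _ => (1 : ℝ)) := by
  funext v
  rw [adjMatrix_mulVec_apply]
  simp [hreg v]

end aux

section spec
variable {V : Type} [Fintype V] [DecidableEq V]
variable (G : SimpleGraph V) [DecidableRel G.Adj]
variable (hA : (G.adjMatrix ℝ).IsHermitian) {d : ℕ} {lam : ℝ}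

lemma my_eig_perp (hreg : G.IsRegularOfDegree d) (i₀ : V)
    (hev : ∀ i, i ≠ i₀ → |hA.eigenvalues i| ≤ lam) (hl : lam < d)
    (i : V) (hi : i ≠ i₀) :
    (hA.eigenvectorBasis i : V → ℝ) ⬝ᵥ (fun _ => (1 : ℝ)) = 0 := by
  set u := (hA.eigenvectorBasis i : V → ℝ) with hu
  have h1 : u ⬝ᵥ (G.adjMatrix ℝ *ᵥ (fun _ => 1)) = (d : ℝ) * (u ⬝ᵥ (fun _ => 1)) := by
    rw [my_mulVec_one G hreg, dotProduct_smul]; simp [smul_eq_mul]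
  have hAu : G.adjMatrix ℝ *ᵥ u = hA.eigenvalues i • u := hA.mulVec_eigenvectorBasis i
  have h2 : u ⬝ᵥ (G.adjMatrix ℝ *ᵥ (fun _ => 1))
      = hA.eigenvalues i * (u ⬝ᵥ (fun _ => 1)) := by
    rw [dotProduct_mulVec]
    have hsym : u ᵥ* G.adjMatrix ℝ = G.adjMatrix ℝ *ᵥ u := by
      conv_lhs => rw [← G.isSymm_adjMatrix.eq (α := ℝ)]
      exact vecMul_transpose _ u
    rw [hsym, hAu, smul_dotProduct]; simp [smul_eq_mul]
  have h3 : ((d : ℝ) - hA.eigenvalues i) * (u ⬝ᵥ (fun _ => 1)) = 0 := by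
    rw [sub_mul, ← h1, ← h2]; ring
  have hne : (d : ℝ) - hA.eigenvalues i ≠ 0 := by
    have := hev i hi
    have : hA.eigenvalues i < (d : ℝ) := lt_of_le_of_lt (le_trans (le_abs_self _) this) hl
    linarith
  exact (mul_eq_zero.1 h3).resolve_left hne

lemma my_one_decomp [Nonempty V] (hreg : G.IsRegularOfDegree d) (i₀ : V)
    (hev : ∀ i, i ≠ i₀ → |hA.eigenvalues i| ≤ lam) (hl : lam < d) :
    (fun _ => (1 : ℝ)) = ((hA.eigenvectorBasis i₀ : V → ℝ) ⬝ᵥ (fun _ => (1 : ℝ)))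
      • (hA.eigenvectorBasis i₀ : V → ℝ) := by
  have h := hA.eigenvectorBasis.sum_repr' (WithLp.toLp 2 (fun _ => (1 : ℝ)))
  simp_rw [my_inner_eq_dot] at h
  replace h : ∑ i, ((hA.eigenvectorBasis i : V → ℝ) ⬝ᵥ (fun _ => (1 : ℝ)))
      • (hA.eigenvectorBasis i : V → ℝ) = fun _ => (1 : ℝ) := by
    simpa using congrArg WithLp.ofLp h
  have hsum : ∑ i, ((hA.eigenvectorBasis i : V → ℝ) ⬝ᵥ (fun _ => (1 : ℝ)))
      • (hA.eigenvectorBasis i : V → ℝ)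
      = ((hA.eigenvectorBasis i₀ : V → ℝ) ⬝ᵥ (fun _ => (1 : ℝ)))
      • (hA.eigenvectorBasis i₀ : V → ℝ) := by
    refine Finset.sum_eq_single_of_mem i₀ (Finset.mem_univ i₀) fun i _ hi => ?_
    rw [my_eig_perp G hA hreg i₀ hev hl i hi, zero_smul]
  exact h.symm.trans hsum

lemma my_perp_component [Nonempty V] (hreg : G.IsRegularOfDegree d) (i₀ : V)
    (hev : ∀ i, i ≠ i₀ → |hA.eigenvalues i| ≤ lam) (hl : lam < d)
    (x : V → ℝ) (hx : (fun _ => (1 : ℝ)) ⬝ᵥ x = 0) :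
    (hA.eigenvectorBasis i₀ : V → ℝ) ⬝ᵥ x = 0 := by
  set a := (hA.eigenvectorBasis i₀ : V → ℝ) ⬝ᵥ (fun _ => (1 : ℝ)) with ha
  have ha0 : a ≠ 0 := by
    intro h0
    have h1 := my_one_decomp G hA hreg i₀ hev hl
    rw [← ha, h0, zero_smul] at h1
    have := congrFun h1 (Classical.arbitrary V)
    norm_num at this
  have h2 : a * ((hA.eigenvectorBasis i₀ : V → ℝ) ⬝ᵥ x) = 0 := by
    have h1 := my_one_decomp G hA hreg i₀ hev hl
    calc a * ((hA.eigenvectorBasis i₀ : V → ℝ) ⬝ᵥ x)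
        = (a • (hA.eigenvectorBasis i₀ : V → ℝ)) ⬝ᵥ x := by
          rw [smul_dotProduct]; simp [smul_eq_mul]
      _ = (fun _ => (1 : ℝ)) ⬝ᵥ x := by rw [← h1]
      _ = 0 := hx
  exact (mul_eq_zero.1 h2).resolve_left ha0

lemma my_spectral_bound [Nonempty V] (hreg : G.IsRegularOfDegree d) (i₀ : V)
    (hev : ∀ i, i ≠ i₀ → |hA.eigenvalues i| ≤ lam) (hl : lam < d) (hlam0 : 0 ≤ lam)
    (x y : V → ℝ) (hx : (fun _ => (1 : ℝ)) ⬝ᵥ x = 0) (hy : (fun _ => (1 : ℝ)) ⬝ᵥ y = 0) :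
    |x ⬝ᵥ (G.adjMatrix ℝ *ᵥ y)| ≤ lam * Real.sqrt (x ⬝ᵥ x) * Real.sqrt (y ⬝ᵥ y) := by
  rw [my_spectral_decomp _ hA]
  set c : V → ℝ := fun i => (hA.eigenvectorBasis i : V → ℝ) ⬝ᵥ x with hc
  set e : V → ℝ := fun i => (hA.eigenvectorBasis i : V → ℝ) ⬝ᵥ y with he
  have hc0 : c i₀ = 0 := my_perp_component G hA hreg i₀ hev hl x hx
  have step1 : |∑ i, hA.eigenvalues i * c i * e i| ≤ ∑ i, lam * (|c i| * |e i|) := by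
    refine le_trans (Finset.abs_sum_le_sum_abs _ _) (Finset.sum_le_sum fun i _ => ?_)
    by_cases hi : i = i₀
    · subst hi; rw [hc0]; simp [abs_nonneg, mul_nonneg hlam0 (mul_nonneg (abs_nonneg _) (abs_nonneg _))]
    · rw [abs_mul, abs_mul, ← mul_assoc]
      exact mul_le_mul_of_nonneg_right
        (mul_le_mul_of_nonneg_right (hev i hi) (abs_nonneg _)) (abs_nonneg _)
  have cauchy : ∑ i, |c i| * |e i| ≤ Real.sqrt (x ⬝ᵥ x) * Real.sqrt (y ⬝ᵥ y) := by
    have h := Finset.sum_mul_sq_le_sq_mul_sq Finset.univ (fun i => |c i|) (fun i => |e i|)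
    have h2 : (∑ i, |c i| * |e i|) ^ 2 ≤ (x ⬝ᵥ x) * (y ⬝ᵥ y) := by
      calc (∑ i, |c i| * |e i|) ^ 2 ≤ (∑ i, |c i| ^ 2) * (∑ i, |e i| ^ 2) := h
        _ = (x ⬝ᵥ x) * (y ⬝ᵥ y) := by
            simp_rw [sq_abs]
            rw [my_parseval _ hA x, my_parseval _ hA y]
    have hnn : 0 ≤ ∑ i, |c i| * |e i| :=
      Finset.sum_nonneg fun i _ => mul_nonneg (abs_nonneg _) (abs_nonneg _)
    calc ∑ i, |c i| * |e i| = Real.sqrt ((∑ i, |c i| * |e i|) ^ 2) := by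
          rw [Real.sqrt_sq hnn]
      _ ≤ Real.sqrt ((x ⬝ᵥ x) * (y ⬝ᵥ y)) := Real.sqrt_le_sqrt h2
      _ = Real.sqrt (x ⬝ᵥ x) * Real.sqrt (y ⬝ᵥ y) := Real.sqrt_mul
          (Finset.sum_nonneg fun i _ => mul_self_nonneg _) _
  calc |∑ i, hA.eigenvalues i * c i * e i| ≤ ∑ i, lam * (|c i| * |e i|) := step1
    _ = lam * ∑ i, |c i| * |e i| := by rw [Finset.mul_sum]
    _ ≤ lam * (Real.sqrt (x ⬝ᵥ x) * Real.sqrt (y ⬝ᵥ y)) :=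
        mul_le_mul_of_nonneg_left cauchy hlam0
    _ = lam * Real.sqrt (x ⬝ᵥ x) * Real.sqrt (y ⬝ᵥ y) := by ring

end spec

section mixing
variable {V : Type} [Fintype V] [DecidableEq V]

def myInd (S : Finset V) : V → ℝ := fun v => if v ∈ S then 1 else 0

lemma my_one_dot_ind (S : Finset V) : (fun _ => (1 : ℝ)) ⬝ᵥ myInd S = S.card := by
  simp [myInd, dotProduct]

lemma my_ind_dot_one (S : Finset V) : myInd S ⬝ᵥ (fun _ => (1 : ℝ)) = S.card := by
  simp [myInd, dotProduct]

lemma my_ind_dot_self (S : Finset V) : myInd S ⬝ᵥ myInd S = S.card := by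
  simp [myInd, dotProduct, ite_and]

lemma my_one_dot_one : (fun (_ : V) => (1 : ℝ)) ⬝ᵥ (fun _ => (1 : ℝ)) = (Fintype.card V : ℝ) := by
  simp [dotProduct]

variable (G : SimpleGraph V) [DecidableRel G.Adj] {d : ℕ} {lam : ℝ}

lemma my_one_dot_mulVec (hreg : G.IsRegularOfDegree d) (y : V → ℝ) :
    (fun _ => (1 : ℝ)) ⬝ᵥ (G.adjMatrix ℝ *ᵥ y) = (d : ℝ) * ((fun _ => (1 : ℝ)) ⬝ᵥ y) := by
  rw [dotProduct_mulVec]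
  have hsym : (fun _ => (1 : ℝ)) ᵥ* G.adjMatrix ℝ = G.adjMatrix ℝ *ᵥ (fun _ => (1 : ℝ)) := by
    conv_lhs => rw [← G.isSymm_adjMatrix.eq (α := ℝ)]
    exact vecMul_transpose _ _
  rw [hsym, my_mulVec_one G hreg, smul_dotProduct]
  simp [smul_eq_mul]

lemma my_mixing [Nonempty V] (hA : (G.adjMatrix ℝ).IsHermitian)
    (hreg : G.IsRegularOfDegree d) (i₀ : V)
    (hev : ∀ i, i ≠ i₀ → |hA.eigenvalues i| ≤ lam) (hl : lam < d) (hlam0 : 0 ≤ lam)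
    (S U : Finset V) :
    myInd S ⬝ᵥ (G.adjMatrix ℝ *ᵥ myInd U) ≤
      (d : ℝ) * S.card * U.card / (Fintype.card V : ℝ)
        + lam * Real.sqrt S.card * Real.sqrt U.card := by
  set N : ℝ := (Fintype.card V : ℝ) with hNdef
  have hN : 0 < N := by
    rw [hNdef]
    exact_mod_cast Fintype.card_pos
  set s : ℝ := (S.card : ℝ) with hsdef
  set t : ℝ := (U.card : ℝ) with htdef
  set x : V → ℝ := myInd S - (s / N) • (fun (_ : V) => (1 : ℝ)) with hxdef
  set y : V → ℝ := myInd U - (t / N) • (fun (_ : V) => (1 : ℝ)) with hydef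
  have hx : (fun _ => (1 : ℝ)) ⬝ᵥ x = 0 := by
    rw [hxdef, dotProduct_sub, dotProduct_smul, my_one_dot_ind, my_one_dot_one]
    rw [smul_eq_mul, ← hNdef, ← hsdef]; field_simp; ring
  have hy : (fun _ => (1 : ℝ)) ⬝ᵥ y = 0 := by
    rw [hydef, dotProduct_sub, dotProduct_smul, my_one_dot_ind, my_one_dot_one]
    rw [smul_eq_mul, ← hNdef, ← htdef]; field_simp; ring
  have hxS : myInd S = x + (s / N) • (fun _ => (1 : ℝ)) := by rw [hxdef]; ring_nf
  have hyU : myInd U = y + (t / N) • (fun _ => (1 : ℝ)) := by rw [hydef]; ring_nf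
  have key : myInd S ⬝ᵥ (G.adjMatrix ℝ *ᵥ myInd U)
      = x ⬝ᵥ (G.adjMatrix ℝ *ᵥ y) + (d : ℝ) * s * t / N := by
    conv_lhs => rw [hxS, hyU]
    have h1 : x ⬝ᵥ (fun _ => (1 : ℝ)) = 0 := by rw [dotProduct_comm]; exact hx
    have h2 : (fun _ => (1 : ℝ)) ⬝ᵥ (G.adjMatrix ℝ *ᵥ y) = 0 := by
      rw [my_one_dot_mulVec G hreg, hy, mul_zero]
    rw [mulVec_add, mulVec_smul, my_mulVec_one G hreg]
    simp only [dotProduct_add, add_dotProduct, dotProduct_smul, smul_dotProduct,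
      smul_eq_mul, h1, h2, my_one_dot_one, ← hNdef]
    field_simp
    ring
  have hxx : x ⬝ᵥ x ≤ s := by
    rw [hxdef, sub_dotProduct, dotProduct_sub, dotProduct_sub, smul_dotProduct,
      smul_dotProduct, dotProduct_smul, dotProduct_smul, my_ind_dot_self, my_ind_dot_one,
      my_one_dot_ind, my_one_dot_one, ← hNdef, ← hsdef]
    have : s ^ 2 / N ≥ 0 := div_nonneg (sq_nonneg _) hN.le
    simp only [smul_eq_mul]
    have heq : s - s / N * s - (s / N * s - s / N * (s / N * N)) = s - s ^ 2 / N := by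
      field_simp; ring
    rw [heq]; linarith
  have hyy : y ⬝ᵥ y ≤ t := by
    rw [hydef, sub_dotProduct, dotProduct_sub, dotProduct_sub, smul_dotProduct,
      smul_dotProduct, dotProduct_smul, dotProduct_smul, my_ind_dot_self, my_ind_dot_one,
      my_one_dot_ind, my_one_dot_one, ← hNdef, ← htdef]
    have : t ^ 2 / N ≥ 0 := div_nonneg (sq_nonneg _) hN.le
    simp only [smul_eq_mul]
    have heq : t - t / N * t - (t / N * t - t / N * (t / N * N)) = t - t ^ 2 / N := by
      field_simp; ring
    rw [heq]; linarith
  have hbd := my_spectral_bound G hA hreg i₀ hev hl hlam0 x y hx hy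
  have hsq : lam * Real.sqrt (x ⬝ᵥ x) * Real.sqrt (y ⬝ᵥ y)
      ≤ lam * Real.sqrt s * Real.sqrt t := by
    have h1 : Real.sqrt (x ⬝ᵥ x) ≤ Real.sqrt s := Real.sqrt_le_sqrt hxx
    have h2 : Real.sqrt (y ⬝ᵥ y) ≤ Real.sqrt t := Real.sqrt_le_sqrt hyy
    have : 0 ≤ Real.sqrt (x ⬝ᵥ x) := Real.sqrt_nonneg _
    have : 0 ≤ Real.sqrt (y ⬝ᵥ y) := Real.sqrt_nonneg _
    exact mul_le_mul (mul_le_mul_of_nonneg_left h1 hlam0) h2 (Real.sqrt_nonneg _)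
      (mul_nonneg hlam0 (Real.sqrt_nonneg _))
  have hle : x ⬝ᵥ (G.adjMatrix ℝ *ᵥ y) ≤ lam * Real.sqrt s * Real.sqrt t :=
    le_trans (le_trans (le_abs_self _) hbd) hsq
  rw [key]
  linarith

end mixing

lemma my_dot_eq_sum {V : Type} [Fintype V] [DecidableEq V] (G : SimpleGraph V)
    [DecidableRel G.Adj] (S U : Finset V) :
    myInd S ⬝ᵥ (G.adjMatrix ℝ *ᵥ myInd U) = ∑ u ∈ S, ((G.neighborFinset u ∩ U).card : ℝ) := by
  unfold myInd
  simp only [dotProduct, SimpleGraph.adjMatrix_mulVec_apply]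
  have h1 : ∀ v : V, (∑ w ∈ G.neighborFinset v, if w ∈ U then (1:ℝ) else 0)
      = ((G.neighborFinset v ∩ U).card : ℝ) := by
    intro v
    rw [Finset.sum_ite_mem]
    simp
  simp_rw [h1, ite_mul, one_mul, zero_mul]
  rw [Finset.sum_ite_mem, Finset.univ_inter]

/-- Lemma 2.5: let `D, k ≥ 1` and `d/λ > kD`. If `G` is an `(n,d,λ)`-graph with a
set `X` such that every vertex has at least `kDλ` neighbours in `X`, then every
set `S` with `|S| ≤ (k−1)λn/d` satisfies `|N(S) ∩ X| ≥ (D−1)|S|`, where `N(S)` is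
the external neighbourhood of `S`. -/
theorem ndl_expansion_into_X (D k : ℝ) (hD : 1 ≤ D) (hk : 1 ≤ k)
    (n d : ℕ) (lam : ℝ) (hd : 0 < d) (hlam : 0 < lam)
    (hratio : k * D < (d : ℝ) / lam)
    (V : Type) [Fintype V] [DecidableEq V] (G : SimpleGraph V) [DecidableRel G.Adj]
    (hG : IsNDLGraph n d lam G) (X : Finset V)
    (hX : ∀ v : V, k * D * lam ≤ (((G.neighborFinset v) ∩ X).card : ℝ)) :
    ∀ S : Finset V, (S.card : ℝ) ≤ (k - 1) * lam * (n : ℝ) / (d : ℝ) →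
      (D - 1) * (S.card : ℝ) ≤
        ((((Finset.univ.filter (fun v => v ∉ S ∧ ∃ u ∈ S, G.Adj u v)) ∩ X).card : ℝ)) := by
  obtain ⟨hn, hreg, hspec⟩ := hG
  intro S hS
  rcases Finset.eq_empty_or_nonempty S with rfl | hSne
  · simp only [Finset.card_empty, Nat.cast_zero, mul_zero]
    positivity
  have hV : Nonempty V := ⟨hSne.choose⟩
  have hA := my_adj_herm G
  obtain ⟨i₀, hi₀, hev⟩ := hspec hA
  have hd' : (0 : ℝ) < (d : ℝ) := by exact_mod_cast hd
  have hld : lam < (d : ℝ) := by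
    rw [lt_div_iff₀ hlam] at hratio
    have hkD : 1 ≤ k * D := by nlinarith
    nlinarith
  set M := (Finset.univ.filter (fun v => v ∉ S ∧ ∃ u ∈ S, G.Adj u v)) ∩ X with hM
  by_contra hcon
  push_neg at hcon
  set U := S ∪ M with hU
  set s : ℝ := (S.card : ℝ) with hs
  have hs1 : (1 : ℝ) ≤ s := by
    rw [hs]; exact_mod_cast hSne.card_pos
  -- lower bound on edge count
  have hlow : k * D * lam * s ≤ myInd S ⬝ᵥ (G.adjMatrix ℝ *ᵥ myInd U) := by
    rw [my_dot_eq_sum]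
    calc k * D * lam * s = ∑ _u ∈ S, k * D * lam := by
          rw [Finset.sum_const, nsmul_eq_mul, hs]; ring
      _ ≤ ∑ u ∈ S, ((G.neighborFinset u ∩ U).card : ℝ) := by
          refine Finset.sum_le_sum fun u hu => le_trans (hX u) ?_
          have hsub : G.neighborFinset u ∩ X ⊆ G.neighborFinset u ∩ U := by
            intro v hv
            rw [Finset.mem_inter] at hv ⊢
            obtain ⟨hadj, hvX⟩ := hv
            refine ⟨hadj, ?_⟩
            rw [hU, Finset.mem_union]
            by_cases hvS : v ∈ S
            · exact Or.inl hvS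
            · refine Or.inr ?_
              rw [hM, Finset.mem_inter, Finset.mem_filter]
              exact ⟨⟨Finset.mem_univ v, hvS, u, hu,
                (G.mem_neighborFinset u v).1 hadj⟩, hvX⟩
          exact_mod_cast Finset.card_le_card hsub
  -- upper bound via mixing
  have hup := my_mixing G hA hreg i₀ hev hld hlam.le S U
  rw [hn] at hup
  set t : ℝ := (U.card : ℝ) with ht
  have hn0 : (0 : ℝ) < (n : ℝ) := by
    rw [← hn]
    exact_mod_cast Fintype.card_pos
  have htD : t < D * s := by
    have h1 : (U.card : ℝ) ≤ (S.card : ℝ) + (M.card : ℝ) := by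
      exact_mod_cast Finset.card_union_le S M
    have h2 : (M.card : ℝ) < (D - 1) * s := hcon
    rw [← ht, ← hs] at h1
    linarith
  have ht0 : (0 : ℝ) ≤ t := by rw [ht]; positivity
  have hs0 : (0 : ℝ) ≤ s := by linarith
  have hD0 : (0 : ℝ) < D := by linarith
  -- arithmetic facts
  have hds : (d : ℝ) * s ≤ (k - 1) * lam * (n : ℝ) := by
    rw [hs]
    rw [le_div_iff₀ hd'] at hS
    nlinarith [hS]
  have hkD : 1 ≤ k * D := by nlinarith
  have hterm1 : (d : ℝ) * s * t / (n : ℝ) < (k - 1) * lam * (D * s) := by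
    rw [div_lt_iff₀ hn0]
    have hds0 : (0 : ℝ) < (d : ℝ) * s := by positivity
    have hDs0 : (0 : ℝ) ≤ D * s := by positivity
    nlinarith [mul_lt_mul_of_pos_left htD hds0, mul_le_mul_of_nonneg_right hds hDs0]
  have hsqrtD : Real.sqrt D ≤ D := by
    have h1 : Real.sqrt D ≤ Real.sqrt (D ^ 2) := Real.sqrt_le_sqrt (by nlinarith)
    rwa [Real.sqrt_sq hD0.le] at h1
  have hsq2 : Real.sqrt s * Real.sqrt t ≤ D * s := by
    calc Real.sqrt s * Real.sqrt t ≤ Real.sqrt s * Real.sqrt (D * s) := by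
          gcongr
      _ = Real.sqrt D * (Real.sqrt s * Real.sqrt s) := by
          rw [Real.sqrt_mul hD0.le]; ring
      _ = Real.sqrt D * s := by rw [Real.mul_self_sqrt hs0]
      _ ≤ D * s := mul_le_mul_of_nonneg_right hsqrtD hs0
  have hterm2 : lam * Real.sqrt s * Real.sqrt t ≤ lam * (D * s) := by
    rw [mul_assoc]
    exact mul_le_mul_of_nonneg_left hsq2 hlam.le
  have hfinal : k * D * lam * s < k * D * lam * s := by
    calc k * D * lam * s ≤ myInd S ⬝ᵥ (G.adjMatrix ℝ *ᵥ myInd U) := hlow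
      _ ≤ (d : ℝ) * s * t / (n : ℝ) + lam * Real.sqrt s * Real.sqrt t := hup
      _ < (k - 1) * lam * (D * s) + lam * (D * s) := by linarith
      _ = k * D * lam * s := by ring
  exact absurd hfinal (lt_irrefl _)
end

section
/- Let D, m ∈ ℕ with D ≥ 3 and set k = ⌈log(2m)/log(D−1)⌉. Let ℓ ∈ ℕ satisfy ℓ ≥ 2k+1 and let G be an m-joined graph containing a (D,m)-extendable subgraph S with |V(S)| ≤ |V(G)| − 10Dm − (ℓ − 2k − 1). Suppose a and b are two distinct vertices of S with d_S(a), d_S(b) ≤ D/2. Then there exists a path P in G from a to b of length ℓ such that all internal vertices of P lie outside V(S), and the subgraph S + P (the union of S and P on vertex set V(S) ∪ V(P)) is (D,m)-extendable in G. -/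
open SimpleGraph

/-- `G` is `m`-joined: between any two disjoint vertex sets of size `m` there is an edge. -/
def IsJoined {V : Type*} (G : SimpleGraph V) (m : ℕ) : Prop :=
  ∀ A B : Finset V, Disjoint A B → A.card = m → B.card = m →
    ∃ a ∈ A, ∃ b ∈ B, G.Adj a b

open Classical in
/-- A subgraph `S` of `G` (with vertex set `S.verts`) is `(D,m)`-extendable in `G`
if `Δ(S) ≤ D` and for every vertex set `U` with `1 ≤ |U| ≤ 2m`,
`|Γ_G(U) \ V(S)| ≥ (D−1)|U| − Σ_{u ∈ U ∩ V(S)} (d_S(u) − 1)`. -/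
def IsExtendable {V : Type*} [Fintype V] {G : SimpleGraph V}
    (S : G.Subgraph) (D m : ℕ) : Prop :=
  (∀ u : V, (S.neighborSet u).ncard ≤ D) ∧
  ∀ U : Finset V, 1 ≤ U.card → U.card ≤ 2 * m →
    ((D : ℤ) - 1) * (U.card : ℤ)
        - ∑ u ∈ U, (if u ∈ S.verts then ((S.neighborSet u).ncard : ℤ) - 1 else 0)
      ≤ (({v : V | ∃ u ∈ U, G.Adj u v} \ S.verts).ncard : ℤ)


set_option linter.unusedSectionVars false
set_option maxHeartbeats 1000000

namespace ConnAux

open Classical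

variable {V : Type} [Fintype V] {G : SimpleGraph V} {D m : ℕ}

/-- The `G`-neighbourhood of a finite vertex set. -/
def nbh (G : SimpleGraph V) (U : Finset V) : Set V := {v : V | ∃ u ∈ U, G.Adj u v}

noncomputable def sigmaS (S : G.Subgraph) (U : Finset V) : ℤ :=
  ∑ u ∈ U, (if u ∈ S.verts then ((S.neighborSet u).ncard : ℤ) - 1 else 0)

lemma isExtendable_iff {S : G.Subgraph} :
    IsExtendable S D m ↔ (∀ u, (S.neighborSet u).ncard ≤ D) ∧
      ∀ U : Finset V, 1 ≤ U.card → U.card ≤ 2 * m →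
        ((D : ℤ) - 1) * (U.card : ℤ) - sigmaS S U ≤ (((nbh G U) \ S.verts).ncard : ℤ) :=
  Iff.rfl

lemma nbh_union (U₁ U₂ : Finset V) : nbh G (U₁ ∪ U₂) = nbh G U₁ ∪ nbh G U₂ := by
  ext v; simp [nbh, or_and_right, exists_or]

lemma nbh_mono {U₁ U₂ : Finset V} (h : U₁ ⊆ U₂) : nbh G U₁ ⊆ nbh G U₂ := by
  intro v ⟨u, hu, hadj⟩; exact ⟨u, h hu, hadj⟩

lemma mem_nbh {U : Finset V} {v : V} : v ∈ nbh G U ↔ ∃ u ∈ U, G.Adj u v := Iff.rfl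

lemma nbh_singleton (v : V) : nbh G {v} = G.neighborSet v := by
  ext w; simp [nbh, adj_comm]


section EdgeLemmas

variable {S : G.Subgraph} {v w : V}

lemma ns_sup_edge (h : G.Adj v w) (u : V) :
    (S ⊔ G.subgraphOfAdj h).neighborSet u = S.neighborSet u ∪ (G.subgraphOfAdj h).neighborSet u :=
  Subgraph.neighborSet_sup u

lemma verts_sup_edge (h : G.Adj v w) (hv : v ∈ S.verts) :
    (S ⊔ G.subgraphOfAdj h).verts = insert w S.verts := by
  rw [Subgraph.verts_sup, subgraphOfAdj_verts]
  ext u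
  simp only [Set.mem_union, Set.mem_insert_iff, Set.mem_singleton_iff]
  constructor
  · rintro (h1 | (rfl | rfl)) <;> simp_all
  · rintro (rfl | h1) <;> simp_all

lemma ns_sup_edge_fst (h : G.Adj v w) :
    (S ⊔ G.subgraphOfAdj h).neighborSet v = insert w (S.neighborSet v) := by
  rw [ns_sup_edge h, neighborSet_fst_subgraphOfAdj]
  ext u; simp [or_comm]

lemma ns_sup_edge_snd (h : G.Adj v w) :
    (S ⊔ G.subgraphOfAdj h).neighborSet w = insert v (S.neighborSet w) := by
  rw [ns_sup_edge h, neighborSet_snd_subgraphOfAdj]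
  ext u; simp [or_comm]

lemma ns_sup_edge_other (h : G.Adj v w) {u : V} (hu1 : u ≠ v) (hu2 : u ≠ w) :
    (S ⊔ G.subgraphOfAdj h).neighborSet u = S.neighborSet u := by
  rw [ns_sup_edge h, neighborSet_subgraphOfAdj_of_ne_of_ne h hu1 hu2, Set.union_empty]

lemma not_mem_ns_of_not_mem_verts {u x : V} (hu : u ∉ S.verts) : x ∉ S.neighborSet u :=
  fun hx => hu (S.edge_vert hx)

lemma ns_eq_empty_of_not_mem_verts {u : V} (hu : u ∉ S.verts) : S.neighborSet u = ∅ := by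
  ext x; simp [Subgraph.mem_neighborSet]
  exact fun hx => hu (S.edge_vert hx)

/-- degree bookkeeping when adding a pendant edge `v — w`, `w` new. -/
lemma card_ns_sup_edge_fst (h : G.Adj v w) (hw : w ∉ S.verts) :
    ((S ⊔ G.subgraphOfAdj h).neighborSet v).ncard = (S.neighborSet v).ncard + 1 := by
  have hwn : w ∉ S.neighborSet v := fun hx => hw (S.edge_vert (S.adj_symm hx))
  rw [ns_sup_edge_fst h, Set.ncard_insert_of_notMem hwn]

lemma card_ns_sup_edge_snd (h : G.Adj v w) (hw : w ∉ S.verts) :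
    ((S ⊔ G.subgraphOfAdj h).neighborSet w).ncard = 1 := by
  rw [ns_sup_edge_snd h, ns_eq_empty_of_not_mem_verts hw]
  simp

lemma sigmaS_sup_pendant (h : G.Adj v w) (hv : v ∈ S.verts) (hw : w ∉ S.verts) (U : Finset V) :
    sigmaS (S ⊔ G.subgraphOfAdj h) U = sigmaS S U + (if v ∈ U then 1 else 0) := by
  classical
  have key : ∀ u : V,
      (if u ∈ (S ⊔ G.subgraphOfAdj h).verts
        then (((S ⊔ G.subgraphOfAdj h).neighborSet u).ncard : ℤ) - 1 else 0)
      = (if u ∈ S.verts then ((S.neighborSet u).ncard : ℤ) - 1 else 0)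
        + (if u = v then 1 else 0) := by
    intro u
    by_cases huv : u = v
    · subst huv
      rw [if_pos hv, if_pos rfl,
        if_pos (by rw [verts_sup_edge h hv]; exact Set.mem_insert_of_mem _ hv),
        card_ns_sup_edge_fst h hw]
      push_cast; ring
    · by_cases huw : u = w
      · subst huw
        rw [if_neg huv, if_neg hw,
          if_pos (by rw [verts_sup_edge h hv]; exact Set.mem_insert _ _),
          card_ns_sup_edge_snd h hw]
        simp
      · rw [if_neg huv, add_zero, ns_sup_edge_other h huv huw, verts_sup_edge h hv]
        have hiff : u ∈ insert w S.verts ↔ u ∈ S.verts := by simp [Set.mem_insert_iff, huw]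
        by_cases hus : u ∈ S.verts
        · rw [if_pos (hiff.mpr hus), if_pos hus]
        · rw [if_neg (fun hc => hus (hiff.mp hc)), if_neg hus]
  rw [sigmaS, sigmaS]
  calc (∑ u ∈ U, if u ∈ (S ⊔ G.subgraphOfAdj h).verts
          then (((S ⊔ G.subgraphOfAdj h).neighborSet u).ncard : ℤ) - 1 else 0)
      = ∑ u ∈ U, ((if u ∈ S.verts then ((S.neighborSet u).ncard : ℤ) - 1 else 0)
          + (if u = v then 1 else 0)) := Finset.sum_congr rfl (fun u _ => key u)
    _ = _ := by
        rw [Finset.sum_add_distrib, Finset.sum_ite_eq' U v (fun _ => (1:ℤ))]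

end EdgeLemmas

section Tight

variable (S : G.Subgraph) (D m : ℕ)

/-- A vertex set attaining equality in the extendability condition. -/
def Tight (U : Finset V) : Prop :=
  U.Nonempty ∧ U.card ≤ 2 * m ∧
    ((nbh G U \ S.verts).ncard : ℤ) ≤ ((D : ℤ) - 1) * U.card - sigmaS S U

variable {S D m}

lemma neg_card_le_sigmaS (U : Finset V) : -(U.card : ℤ) ≤ sigmaS S U := by
  rw [sigmaS]
  calc -(U.card : ℤ) = ∑ _u ∈ U, (-1 : ℤ) := by simp
    _ ≤ _ := by
        refine Finset.sum_le_sum (fun u _ => ?_)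
        by_cases hu : u ∈ S.verts
        · rw [if_pos hu]; have : (0:ℤ) ≤ ((S.neighborSet u).ncard : ℤ) := Int.natCast_nonneg _
          linarith
        · rw [if_neg hu]; norm_num

lemma nbh_diff_card_le (hD : 3 ≤ D) {U : Finset V} (hT : Tight S D m U) :
    (nbh G U \ S.verts).ncard ≤ 2 * D * m := by
  have h1 : ((nbh G U \ S.verts).ncard : ℤ) ≤ (D : ℤ) * U.card := by
    have := neg_card_le_sigmaS (S := S) U
    have := hT.2.2
    nlinarith [Int.natCast_nonneg U.card]
  have h2 : (D : ℤ) * U.card ≤ (D:ℤ) * (2 * m) := by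
    have : (U.card : ℤ) ≤ 2 * m := by exact_mod_cast hT.2.1
    have : (0:ℤ) ≤ D := Int.natCast_nonneg _
    nlinarith
  have : ((nbh G U \ S.verts).ncard : ℤ) ≤ 2 * (D:ℤ) * m := by linarith
  exact_mod_cast this

lemma tight_card_lt (hD : 3 ≤ D) (hm : 1 ≤ m) (hG : IsJoined G m)
    (hsize : S.verts.ncard + 2 * D * m + 3 * m ≤ Fintype.card V)
    {U : Finset V} (hT : Tight S D m U) : U.card < m := by
  by_contra hge
  push_neg at hge
  obtain ⟨Q, hQ⟩ : ∃ q, q = 2 * D * m := ⟨_, rfl⟩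
  rw [← hQ] at hsize
  set X : Set V := S.verts ∪ (nbh G U \ S.verts) ∪ ↑U with hXdef
  have hXcard : X.ncard ≤ S.verts.ncard + Q + 2 * m := by
    calc X.ncard ≤ (S.verts ∪ (nbh G U \ S.verts)).ncard + (↑U : Set V).ncard :=
          Set.ncard_union_le _ _
      _ ≤ (S.verts.ncard + (nbh G U \ S.verts).ncard) + (↑U : Set V).ncard := by
          exact Nat.add_le_add_right (Set.ncard_union_le _ _) _
      _ ≤ S.verts.ncard + Q + 2 * m := by
          have h1 := nbh_diff_card_le hD hT
          rw [← hQ] at h1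
          have h2 : (↑U : Set V).ncard = U.card := Set.ncard_coe_finset U
          have h3 : U.card ≤ 2 * m := hT.2.1
          omega
  have hcompl : m ≤ (Xᶜ).ncard := by
    have hsum : X.ncard + (Xᶜ).ncard = Fintype.card V := by
      rw [← Nat.card_eq_fintype_card]
      exact Set.ncard_add_ncard_compl X
    omega
  obtain ⟨A, hAsub, hAcard⟩ := Finset.exists_subset_card_eq (le_trans hge le_rfl : m ≤ U.card)
  have hXc_fin : (Xᶜ).Finite := Set.toFinite _
  have hcompl' : m ≤ hXc_fin.toFinset.card := by
    rwa [← Set.ncard_eq_toFinset_card _ hXc_fin]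
  obtain ⟨B, hBsub, hBcard⟩ := Finset.exists_subset_card_eq hcompl'
  have hBX : ∀ b ∈ B, b ∉ X := by
    intro b hb
    have := hBsub hb
    rw [Set.Finite.mem_toFinset] at this
    exact this
  have hdisj : Disjoint A B := by
    rw [Finset.disjoint_left]
    intro a haA haB
    exact hBX a haB (Or.inr (by exact_mod_cast hAsub haA))
  obtain ⟨a, haA, b, hbB, hadj⟩ := hG A B hdisj hAcard hBcard
  have hbn : b ∈ nbh G U := ⟨a, hAsub haA, hadj⟩
  apply hBX b hbB
  by_cases hbs : b ∈ S.verts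
  · exact Or.inl (Or.inl hbs)
  · exact Or.inl (Or.inr ⟨hbn, hbs⟩)

lemma tight_union (hS : IsExtendable S D m) {U₁ U₂ : Finset V}
    (h1 : Tight S D m U₁) (h2 : Tight S D m U₂) (hc : (U₁ ∪ U₂).card ≤ 2 * m) :
    Tight S D m (U₁ ∪ U₂) := by
  refine ⟨h1.1.mono Finset.subset_union_left, hc, ?_⟩
  have hcards : ((U₁ ∪ U₂).card : ℤ) + ((U₁ ∩ U₂).card : ℤ) = (U₁.card : ℤ) + U₂.card := by
    exact_mod_cast congrArg Nat.cast (Finset.card_union_add_card_inter U₁ U₂)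
  have hsig : sigmaS S (U₁ ∪ U₂) + sigmaS S (U₁ ∩ U₂) = sigmaS S U₁ + sigmaS S U₂ := by
    rw [sigmaS, sigmaS, sigmaS, sigmaS]
    exact Finset.sum_union_inter
  have hnbh : ((nbh G (U₁ ∪ U₂) \ S.verts).ncard : ℤ) + ((nbh G (U₁ ∩ U₂) \ S.verts).ncard : ℤ)
      ≤ ((nbh G U₁ \ S.verts).ncard : ℤ) + ((nbh G U₂ \ S.verts).ncard : ℤ) := by
    have hu : nbh G (U₁ ∪ U₂) \ S.verts = (nbh G U₁ \ S.verts) ∪ (nbh G U₂ \ S.verts) := by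
      rw [nbh_union, Set.union_diff_distrib]
    have hi : nbh G (U₁ ∩ U₂) \ S.verts ⊆ (nbh G U₁ \ S.verts) ∩ (nbh G U₂ \ S.verts) := by
      intro x hx
      exact ⟨⟨nbh_mono Finset.inter_subset_left hx.1, hx.2⟩,
        ⟨nbh_mono Finset.inter_subset_right hx.1, hx.2⟩⟩
    have := Set.ncard_union_add_ncard_inter (nbh G U₁ \ S.verts) (nbh G U₂ \ S.verts)
    have hle : (nbh G (U₁ ∩ U₂) \ S.verts).ncard ≤
        ((nbh G U₁ \ S.verts) ∩ (nbh G U₂ \ S.verts)).ncard := Set.ncard_le_ncard hi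
    rw [hu]
    push_cast
    omega
  have hint : ((D : ℤ) - 1) * ((U₁ ∩ U₂).card : ℤ) - sigmaS S (U₁ ∩ U₂)
      ≤ ((nbh G (U₁ ∩ U₂) \ S.verts).ncard : ℤ) := by
    rcases Finset.eq_empty_or_nonempty (U₁ ∩ U₂) with he | hne
    · rw [he]
      simp [sigmaS, nbh]
    · exact hS.2 _ (Finset.card_pos.mpr hne) (le_trans (Finset.card_le_card
        (le_trans Finset.inter_subset_left Finset.subset_union_left |>.trans subset_rfl)) hc)
  have t1 := h1.2.2
  have t2 := h2.2.2
  have hcards' : ((D:ℤ)-1) * ((U₁ ∪ U₂).card : ℤ) + ((D:ℤ)-1) * ((U₁ ∩ U₂).card : ℤ)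
      = ((D:ℤ)-1) * (U₁.card : ℤ) + ((D:ℤ)-1) * (U₂.card : ℤ) := by
    linear_combination ((D:ℤ)-1) * hcards
  linarith

lemma tight_insert_not_mem {U : Finset V} (hv : v ∉ U) :
    sigmaS S (insert v U) = (if v ∈ S.verts then ((S.neighborSet v).ncard : ℤ) - 1 else 0)
      + sigmaS S U := by
  rw [sigmaS, sigmaS, Finset.sum_insert hv]

/-- The key one-step extension lemma: we can add a pendant edge at `v`
keeping `(D,m)`-extendability. -/
lemma one_step (hD : 3 ≤ D) (hm : 1 ≤ m) (hG : IsJoined G m) (hS : IsExtendable S D m)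
    {v : V} (hv : v ∈ S.verts) (hd : (S.neighborSet v).ncard + 1 ≤ D)
    (hsize : S.verts.ncard + 2 * D * m + 3 * m ≤ Fintype.card V) :
    ∃ w, w ∉ S.verts ∧ ∃ h : G.Adj v w, IsExtendable (S ⊔ G.subgraphOfAdj h) D m := by
  classical
  have hS2 := (isExtendable_iff.mp hS).2
  set W : Set V := G.neighborSet v \ S.verts with hWdef
  -- W is nonempty
  have hv1 : ({v} : Finset V).card = 1 := rfl
  have hext_v := hS2 {v} (by simp) (by omega)
  have hsig_v : sigmaS S {v} = ((S.neighborSet v).ncard : ℤ) - 1 := by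
    rw [sigmaS, Finset.sum_singleton, if_pos hv]
  have hWeq : nbh G {v} \ S.verts = W := by rw [nbh_singleton]
  have hWlb : ((D : ℤ) - (S.neighborSet v).ncard) ≤ (W.ncard : ℤ) := by
    rw [← hWeq]
    rw [hsig_v, hv1] at hext_v
    push_cast at hext_v ⊢
    linarith
  have hWne : W.Nonempty := by
    rw [← Set.ncard_pos (Set.toFinite _)]
    have : (0:ℤ) < (W.ncard : ℤ) := by
      have : ((S.neighborSet v).ncard : ℤ) + 1 ≤ (D : ℤ) := by exact_mod_cast hd
      linarith
    exact_mod_cast this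
  by_contra hcon
  push_neg at hcon
  -- for every w ∈ W there is a tight witness set
  have hwitness : ∀ w ∈ W, ∃ U : Finset V, Tight S D m U ∧ v ∉ U ∧ w ∈ nbh G U := by
    intro w hw
    have hwS : w ∉ S.verts := hw.2
    have hadj : G.Adj v w := hw.1
    have hnotext := hcon w hwS hadj
    rw [isExtendable_iff] at hnotext
    push_neg at hnotext
    -- the degree condition holds for the extended graph
    have hdeg : ∀ u : V, (((S ⊔ G.subgraphOfAdj hadj).neighborSet u).ncard) ≤ D := by
      intro u
      by_cases huv : u = v
      · subst huv; rw [card_ns_sup_edge_fst hadj hwS]; omega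
      · by_cases huw : u = w
        · subst huw; rw [card_ns_sup_edge_snd hadj hwS]; omega
        · rw [ns_sup_edge_other hadj huv huw]; exact hS.1 u
    obtain ⟨U, hU1, hU2, hUviol⟩ := hnotext hdeg
    -- translate the violated inequality back to S
    set S' := S ⊔ G.subgraphOfAdj hadj with hS'def
    have hsig' : sigmaS S' U = sigmaS S U + (if v ∈ U then 1 else 0) :=
      sigmaS_sup_pendant hadj hv hwS U
    have hverts' : S'.verts = insert w S.verts := verts_sup_edge hadj hv
    have hAsub : nbh G U \ S.verts ⊆ (nbh G U \ S'.verts) ∪ {w} := by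
      intro x hx
      by_cases hxw : x = w
      · exact Or.inr (by simp [hxw])
      · exact Or.inl ⟨hx.1, by rw [hverts']; simp [hxw]; exact fun hc => hx.2 hc⟩
    have hcard_le : ((nbh G U \ S.verts).ncard : ℤ) ≤ ((nbh G U \ S'.verts).ncard : ℤ) + 1 := by
      have := Set.ncard_le_ncard hAsub (Set.toFinite _)
      have hun := Set.ncard_union_le (nbh G U \ S'.verts) ({w} : Set V)
      have : (nbh G U \ S.verts).ncard ≤ (nbh G U \ S'.verts).ncard + 1 := by
        have hsing : ({w} : Set V).ncard = 1 := Set.ncard_singleton w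
        omega
      exact_mod_cast this
    have hSU := hS2 U hU1 hU2
    have hviol2 : ((nbh G U \ S'.verts).ncard : ℤ)
        < ((D:ℤ) - 1) * U.card - sigmaS S U - (if v ∈ U then 1 else 0) := by
      have h2 := hUviol
      rw [hsig'] at h2
      linarith [h2]
    refine ⟨U, ⟨Finset.card_pos.mp (by omega), hU2, ?_⟩, ?_, ?_⟩
    · -- tightness
      by_cases hvU : v ∈ U
      · rw [if_pos hvU] at hviol2
        linarith
      · rw [if_neg hvU] at hviol2
        linarith
    · -- v ∉ U
      by_contra hvU
      rw [if_pos hvU] at hviol2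
      -- then ncard' < (D-1)c - sigma - 1, but ncard ≥ (D-1)c - sigma and ncard ≤ ncard' + 1
      linarith
    · -- w ∈ nbh G U
      by_contra hwn
      have heq : nbh G U \ S'.verts = nbh G U \ S.verts := by
        rw [hverts']
        ext x
        simp only [Set.mem_diff, Set.mem_insert_iff]
        constructor
        · rintro ⟨hx1, hx2⟩; exact ⟨hx1, fun hc => hx2 (Or.inr hc)⟩
        · rintro ⟨hx1, hx2⟩
          refine ⟨hx1, ?_⟩
          rintro (rfl | hc)
          · exact hwn hx1
          · exact hx2 hc
      rw [heq] at hviol2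
      have : (0:ℤ) ≤ (if v ∈ U then (1:ℤ) else 0) := by positivity
      linarith
  -- build the union of all witness sets
  have hWfin : W.Finite := Set.toFinite _
  have key : ∀ T : Finset V, (↑T ⊆ W) → ∃ U0 : Finset V, U0.card < m ∧ v ∉ U0 ∧
      (∀ w ∈ T, w ∈ nbh G U0) ∧ (U0.Nonempty → Tight S D m U0) ∧ (T.Nonempty → U0.Nonempty) := by
    intro T
    induction T using Finset.induction_on with
    | empty =>
        intro _
        exact ⟨∅, by simp; omega, by simp, by simp, fun h => absurd h (by simp), by simp⟩
    | insert _ _ hnotmem ih =>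
        rename_i w T'
        intro hsub
        have hsub' : ↑T' ⊆ W := fun x hx => hsub (by simp [hx])
        obtain ⟨U0, hc0, hv0, hnbh0, htight0, hne0⟩ := ih hsub'
        have hwW : w ∈ W := hsub (by simp)
        obtain ⟨Uw, hUwT, hUwv, hUww⟩ := hwitness w hwW
        have hUwcard : Uw.card < m := tight_card_lt hD hm hG hsize hUwT
        have htUnion : Tight S D m (U0 ∪ Uw) := by
          rcases Finset.eq_empty_or_nonempty U0 with he | hne
          · rw [he, Finset.empty_union]; exact hUwT
          · exact tight_union hS (htight0 hne) hUwT
              (by have := Finset.card_union_le U0 Uw; omega)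
        refine ⟨U0 ∪ Uw, tight_card_lt hD hm hG hsize htUnion,
          by simp [hv0, hUwv], ?_, fun _ => htUnion, fun _ => htUnion.1⟩
        intro x hx
        rcases Finset.mem_insert.mp hx with rfl | hx'
        · exact nbh_mono Finset.subset_union_right hUww
        · exact nbh_mono Finset.subset_union_left (hnbh0 x hx')
  obtain ⟨U0, hc0, hv0, hnbh0, htight0, hne0⟩ := key hWfin.toFinset
    (by rw [Set.Finite.coe_toFinset])
  have hU0ne : U0.Nonempty := hne0 (by rwa [Set.Finite.toFinset_nonempty])
  have hT0 : Tight S D m U0 := htight0 hU0ne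
  -- apply extendability to insert v U0
  have hcard_ins : (insert v U0).card = U0.card + 1 := Finset.card_insert_of_notMem hv0
  have hext := hS2 (insert v U0) (by omega) (by omega)
  have hsig_ins := tight_insert_not_mem (S := S) (v := v) hv0
  have hnbh_ins : nbh G (insert v U0) \ S.verts = nbh G U0 \ S.verts := by
    have : (insert v U0) = {v} ∪ U0 := by rw [Finset.insert_eq]
    rw [this, nbh_union, Set.union_diff_distrib, hWeq]
    apply Set.union_eq_self_of_subset_left
    intro w hw
    exact ⟨hnbh0 w (by rw [Set.Finite.mem_toFinset]; exact hw), hw.2⟩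
  rw [hnbh_ins, hsig_ins, if_pos hv, hcard_ins] at hext
  have htt := hT0.2.2
  push_cast at hext
  have hdz : ((S.neighborSet v).ncard : ℤ) + 1 ≤ (D : ℤ) := by exact_mod_cast hd
  linarith

end Tight

section Prune

variable {S : G.Subgraph} {D m : ℕ}

lemma ns_deleteVerts_other {w u : V} (hu : u ≠ w) :
    (S.deleteVerts {w}).neighborSet u = S.neighborSet u \ {w} := by
  ext x
  simp only [Subgraph.mem_neighborSet, Subgraph.deleteVerts_adj, Set.mem_diff,
    Set.mem_singleton_iff]
  constructor
  · rintro ⟨_, _, _, hxw, hadj⟩; exact ⟨hadj, hxw⟩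
  · rintro ⟨hadj, hxw⟩
    exact ⟨S.edge_vert hadj, hu, S.edge_vert (S.adj_symm hadj), hxw, hadj⟩

lemma ns_deleteVerts_self (w : V) : (S.deleteVerts {w}).neighborSet w = ∅ := by
  ext x
  simp [Subgraph.mem_neighborSet, Subgraph.deleteVerts_adj]

/-- Removing a leaf (a vertex of degree at most one) preserves extendability. -/
lemma delete_leaf (hS : IsExtendable S D m) {w : V} (hdw : (S.neighborSet w).ncard ≤ 1) :
    IsExtendable (S.deleteVerts {w}) D m := by
  classical
  have hS2 := (isExtendable_iff.mp hS).2
  set S' := S.deleteVerts {w} with hS'def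
  have hverts' : S'.verts = S.verts \ {w} := rfl
  rw [isExtendable_iff]
  constructor
  · intro u
    by_cases huw : u = w
    · subst huw; rw [ns_deleteVerts_self]; simp
    · rw [ns_deleteVerts_other huw]
      exact le_trans (Set.ncard_le_ncard Set.diff_subset) (hS.1 u)
  intro U hU1 hU2
  set e : ℤ := if (∃ u ∈ U, w ∈ S.neighborSet u) then 1 else 0 with hedef
  -- pointwise comparison of the degree sums
  have hterm : ∀ u ∈ U,
      (if u ∈ S.verts then ((S.neighborSet u).ncard : ℤ) - 1 else 0)
        - (if w ∈ S.neighborSet u then 1 else 0)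
      ≤ (if u ∈ S'.verts then ((S'.neighborSet u).ncard : ℤ) - 1 else 0) := by
    intro u _
    by_cases huw : u = w
    · have h1 : u ∉ S'.verts := by rw [hverts', huw]; simp
      rw [if_neg h1]
      by_cases hus : u ∈ S.verts
      · rw [if_pos hus]
        have hww : w ∉ S.neighborSet u := fun hc => (S.adj_sub hc).ne huw
        rw [if_neg hww]
        have : ((S.neighborSet u).ncard : ℤ) ≤ 1 := by rw [huw]; exact_mod_cast hdw
        linarith
      · rw [if_neg hus]
        split <;> norm_num
    · by_cases hus : u ∈ S.verts
      · have h1 : u ∈ S'.verts := by rw [hverts']; exact ⟨hus, huw⟩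
        rw [if_pos hus, if_pos h1, ns_deleteVerts_other huw]
        by_cases hwn : w ∈ S.neighborSet u
        · rw [if_pos hwn]
          have : (S.neighborSet u \ {w}).ncard = (S.neighborSet u).ncard - 1 :=
            Set.ncard_diff_singleton_of_mem hwn
          have hpos : 1 ≤ (S.neighborSet u).ncard := by
            rw [← Set.ncard_singleton w]
            exact Set.ncard_le_ncard (Set.singleton_subset_iff.mpr hwn)
          rw [this]
          push_cast [hpos]
          linarith
        · rw [if_neg hwn, Set.diff_singleton_eq_self hwn]
          linarith
      · have h1 : u ∉ S'.verts := by rw [hverts']; exact fun hc => hus hc.1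
        rw [if_neg hus, if_neg h1]
        split <;> norm_num
  have hsum : sigmaS S U - (∑ u ∈ U, if w ∈ S.neighborSet u then (1:ℤ) else 0)
      ≤ sigmaS S' U := by
    rw [sigmaS, sigmaS, ← Finset.sum_sub_distrib]
    exact Finset.sum_le_sum hterm
  have hcnt : (∑ u ∈ U, if w ∈ S.neighborSet u then (1:ℤ) else 0) ≤ e := by
    rw [hedef]
    by_cases hex : ∃ u ∈ U, w ∈ S.neighborSet u
    · rw [if_pos hex]
      have hsb : (∑ u ∈ U, if w ∈ S.neighborSet u then (1:ℤ) else 0)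
          = ((U.filter (fun u => w ∈ S.neighborSet u)).card : ℤ) := by
        rw [Finset.sum_boole]
      have hfin : (S.neighborSet w).Finite := Set.toFinite _
      have hsubf : U.filter (fun u => w ∈ S.neighborSet u) ⊆ hfin.toFinset := by
        intro u hu
        rw [Set.Finite.mem_toFinset]
        exact S.adj_symm (Finset.mem_filter.mp hu).2
      have hc1 : (U.filter (fun u => w ∈ S.neighborSet u)).card ≤ 1 := by
        calc _ ≤ hfin.toFinset.card := Finset.card_le_card hsubf
          _ = (S.neighborSet w).ncard := (Set.ncard_eq_toFinset_card _ hfin).symm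
          _ ≤ 1 := hdw
      rw [hsb]; exact_mod_cast hc1
    · rw [if_neg hex]
      push_neg at hex
      rw [Finset.sum_congr rfl (fun u hu => if_neg (hex u hu))]
      simp
  have hLHS : ((nbh G U \ S.verts).ncard : ℤ) + e ≤ ((nbh G U \ S'.verts).ncard : ℤ) := by
    have hsub : nbh G U \ S.verts ⊆ nbh G U \ S'.verts := by
      intro x hx
      exact ⟨hx.1, fun hc => hx.2 hc.1⟩
    rcases eq_or_ne e 0 with he0 | he1
    · rw [he0, add_zero]
      exact_mod_cast Set.ncard_le_ncard hsub
    · have hex : ∃ u ∈ U, w ∈ S.neighborSet u := by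
        by_contra hc
        rw [hedef, if_neg hc] at he1
        exact he1 rfl
      obtain ⟨u, huU, hwn⟩ := hex
      have hwin : w ∈ nbh G U \ S'.verts := by
        refine ⟨⟨u, huU, S.adj_sub hwn⟩, ?_⟩
        rw [hverts']; simp
      have hwnotin : w ∉ nbh G U \ S.verts := fun hc => hc.2 (S.edge_vert (S.adj_symm hwn))
      have : insert w (nbh G U \ S.verts) ⊆ nbh G U \ S'.verts := by
        rw [Set.insert_subset_iff]; exact ⟨hwin, hsub⟩
      have hcard := Set.ncard_le_ncard this (Set.toFinite _)
      rw [Set.ncard_insert_of_notMem hwnotin] at hcard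
      have he : e = 1 := by
        rw [hedef, if_pos ⟨u, huU, hwn⟩]
      rw [he]
      push_cast
      omega
  have hmain := hS2 U hU1 hU2
  linarith

/-- One subgraph can be obtained from another by repeatedly deleting leaves. -/
def PrunableTo (A B : G.Subgraph) : Prop :=
  Relation.ReflTransGen
    (fun X Y => ∃ w ∈ X.verts, (X.neighborSet w).ncard ≤ 1 ∧ Y = X.deleteVerts {w}) A B

lemma PrunableTo.refl (A : G.Subgraph) : PrunableTo A A := Relation.ReflTransGen.refl

lemma PrunableTo.trans {A B C : G.Subgraph} (h1 : PrunableTo A B) (h2 : PrunableTo B C) :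
    PrunableTo A C := Relation.ReflTransGen.trans h1 h2

lemma PrunableTo.extendable {A B : G.Subgraph} (h : PrunableTo A B)
    (hA : IsExtendable A D m) : IsExtendable B D m := by
  induction h with
  | refl => exact hA
  | tail _ hstep ih =>
      obtain ⟨w, _, hdeg, rfl⟩ := hstep
      exact delete_leaf ih hdeg

lemma PrunableTo.le {A B : G.Subgraph} (h : PrunableTo A B) : B ≤ A := by
  induction h with
  | refl => exact le_rfl
  | tail _ hstep ih =>
      obtain ⟨w, _, hdeg, rfl⟩ := hstep
      exact le_trans Subgraph.deleteVerts_le ih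

lemma deleteVerts_sup_of_not_mem {X T : G.Subgraph} {w : V} (hw : w ∉ T.verts) :
    (X ⊔ T).deleteVerts {w} = X.deleteVerts {w} ⊔ T := by
  ext u v
  · simp only [Subgraph.deleteVerts_verts, Subgraph.verts_sup, Set.mem_diff, Set.mem_union,
      Set.mem_singleton_iff]
    constructor
    · rintro ⟨h1 | h1, h2⟩
      · exact Or.inl ⟨h1, h2⟩
      · exact Or.inr h1
    · rintro (⟨h1, h2⟩ | h1)
      · exact ⟨Or.inl h1, h2⟩
      · exact ⟨Or.inr h1, fun hc => hw (hc ▸ h1)⟩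
  · simp only [Subgraph.deleteVerts_adj, Subgraph.verts_sup, Subgraph.sup_adj, Set.mem_union,
      Set.mem_singleton_iff]
    constructor
    · rintro ⟨h1, h2, h3, h4, h5 | h5⟩
      · exact Or.inl ⟨X.edge_vert h5, h2, X.edge_vert (X.adj_symm h5), h4, h5⟩
      · exact Or.inr h5
    · rintro (⟨h1, h2, h3, h4, h5⟩ | h1)
      · exact ⟨Or.inl h1, h2, Or.inl h3, h4, Or.inl h5⟩
      · exact ⟨Or.inr (T.edge_vert h1), fun hc => hw (hc ▸ T.edge_vert h1), 
          Or.inr (T.edge_vert (T.adj_symm h1)),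
          fun hc => hw (hc ▸ T.edge_vert (T.adj_symm h1)), Or.inr h1⟩

lemma PrunableTo.sup_right {X Y T : G.Subgraph} (h : PrunableTo X Y)
    (hT : T.verts ∩ X.verts ⊆ Y.verts) : PrunableTo (X ⊔ T) (Y ⊔ T) := by
  induction h using Relation.ReflTransGen.head_induction_on with
  | refl => exact PrunableTo.refl _
  | head hstep htail ih =>
      rename_i X' Z
      obtain ⟨w, hwv, hdeg, rfl⟩ := hstep
      have hYZ : Y.verts ⊆ (X'.deleteVerts {w}).verts := (PrunableTo.le htail).1
      have hwT : w ∉ T.verts := by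
        intro hc
        have : w ∈ Y.verts := hT ⟨hc, hwv⟩
        have := hYZ this
        rw [Subgraph.deleteVerts_verts] at this
        exact this.2 rfl
      have hT' : T.verts ∩ (X'.deleteVerts {w}).verts ⊆ Y.verts := by
        intro x hx
        exact hT ⟨hx.1, (Subgraph.deleteVerts_le).1 hx.2⟩
      refine Relation.ReflTransGen.head ?_ (ih hT')
      refine ⟨w, Or.inl hwv, ?_, (deleteVerts_sup_of_not_mem hwT).symm⟩
      rw [Subgraph.neighborSet_sup, ns_eq_empty_of_not_mem_verts hwT, Set.union_empty]
      exact hdeg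

lemma prunable_pendant {A : G.Subgraph} {r x : V} (h : G.Adj r x) (hr : r ∈ A.verts)
    (hx : x ∉ A.verts) : PrunableTo (A ⊔ G.subgraphOfAdj h) A := by
  have heq : (A ⊔ G.subgraphOfAdj h).deleteVerts {x} = A := by
    ext u v
    · simp only [Subgraph.deleteVerts_verts, Subgraph.verts_sup, subgraphOfAdj_verts,
        Set.mem_diff, Set.mem_union, Set.mem_insert_iff, Set.mem_singleton_iff]
      constructor
      · rintro ⟨h1 | (rfl | rfl), h2⟩
        · exact h1
        · exact hr
        · exact absurd rfl h2
      · intro h1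
        exact ⟨Or.inl h1, fun hc => hx (hc ▸ h1)⟩
    · simp only [Subgraph.deleteVerts_adj, Subgraph.verts_sup, Subgraph.sup_adj,
        subgraphOfAdj_adj, Set.mem_union, Set.mem_singleton_iff]
      constructor
      · rintro ⟨h1, h2, h3, h4, h5 | h5⟩
        · exact h5
        · rw [Sym2.eq_iff] at h5
          rcases h5 with ⟨rfl, rfl⟩ | ⟨rfl, rfl⟩
          · exact absurd rfl h4
          · exact absurd rfl h2
      · intro h1
        have h2 := A.edge_vert h1
        have h3 := A.edge_vert (A.adj_symm h1)
        exact ⟨Or.inl h2, fun hc => hx (hc ▸ h2), Or.inl h3, fun hc => hx (hc ▸ h3),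
          Or.inl h1⟩
  refine Relation.ReflTransGen.single ⟨x, ?_, ?_, heq.symm⟩
  · rw [Subgraph.verts_sup, subgraphOfAdj_verts]
    exact Or.inr (by simp)
  · rw [Subgraph.neighborSet_sup, ns_eq_empty_of_not_mem_verts hx, Set.empty_union,
      neighborSet_snd_subgraphOfAdj]
    simp

/-- Adding an edge of `G` between two existing vertices of small degree preserves
extendability. -/
lemma add_edge_extendable {x y : V} (hS : IsExtendable S D m) (h : G.Adj x y)
    (hx : x ∈ S.verts) (hy : y ∈ S.verts)
    (hdx : (S.neighborSet x).ncard + 1 ≤ D) (hdy : (S.neighborSet y).ncard + 1 ≤ D) :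
    IsExtendable (S ⊔ G.subgraphOfAdj h) D m := by
  classical
  have hS2 := (isExtendable_iff.mp hS).2
  set S' := S ⊔ G.subgraphOfAdj h with hS'def
  have hverts' : S'.verts = S.verts := by
    rw [hS'def, Subgraph.verts_sup, subgraphOfAdj_verts]
    rw [Set.union_eq_self_of_subset_right]
    intro u hu
    rcases hu with rfl | hu
    · exact hx
    · rw [Set.mem_singleton_iff] at hu; exact hu ▸ hy
  rw [isExtendable_iff]
  constructor
  · intro u
    rw [hS'def, Subgraph.neighborSet_sup]
    by_cases hux : u = x
    · subst hux
      rw [neighborSet_fst_subgraphOfAdj]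
      calc (S.neighborSet u ∪ {y}).ncard ≤ (S.neighborSet u).ncard + ({y} : Set V).ncard :=
            Set.ncard_union_le _ _
        _ ≤ D := by rw [Set.ncard_singleton]; omega
    · by_cases huy : u = y
      · subst huy
        rw [neighborSet_snd_subgraphOfAdj]
        calc (S.neighborSet u ∪ {x}).ncard ≤ (S.neighborSet u).ncard + ({x} : Set V).ncard :=
              Set.ncard_union_le _ _
          _ ≤ D := by rw [Set.ncard_singleton]; omega
      · rw [neighborSet_subgraphOfAdj_of_ne_of_ne h hux huy, Set.union_empty]
        exact hS.1 u
  intro U hU1 hU2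
  have hsig : sigmaS S U ≤ sigmaS S' U := by
    rw [sigmaS, sigmaS]
    refine Finset.sum_le_sum (fun u _ => ?_)
    have hvertsiff : u ∈ S'.verts ↔ u ∈ S.verts := by rw [hverts']
    by_cases hus : u ∈ S.verts
    · rw [if_pos hus, if_pos (hvertsiff.mpr hus)]
      have hsub : S.neighborSet u ⊆ S'.neighborSet u := by
        rw [hS'def, Subgraph.neighborSet_sup]; exact Set.subset_union_left
      have := Set.ncard_le_ncard hsub (Set.toFinite _)
      push_cast
      linarith [this]
    · rw [if_neg hus, if_neg (fun hc => hus (hvertsiff.mp hc))]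
  have hmain := hS2 U hU1 hU2
  rw [← hverts'] at hmain
  linarith

end Prune

section Build

variable {D m : ℕ}

lemma star_lemma (hD : 3 ≤ D) (hm : 1 ≤ m) (hG : IsJoined G m) :
    ∀ (c : ℕ) (S : G.Subgraph) (r : V), IsExtendable S D m → r ∈ S.verts →
    (S.neighborSet r).ncard + c ≤ D →
    S.verts.ncard + c + 2 * D * m + 3 * m ≤ Fintype.card V →
    ∃ (S' : G.Subgraph) (L : Finset V),
      S ≤ S' ∧ IsExtendable S' D m ∧
      S'.verts = S.verts ∪ ↑L ∧ (↑L ∩ S.verts : Set V) = ∅ ∧ L.card = c ∧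
      (∀ x ∈ L, S'.Adj r x) ∧
      (∀ x ∈ L, S'.neighborSet x = {r}) ∧
      (S'.neighborSet r = S.neighborSet r ∪ ↑L) ∧
      (∀ u, u ≠ r → u ∉ L → S'.neighborSet u = S.neighborSet u) ∧
      PrunableTo S' S ∧
      (∀ x ∈ L, ∀ (h : G.Adj r x), PrunableTo S' (S ⊔ G.subgraphOfAdj h)) := by
  intro c
  induction c with
  | zero =>
      intro S r hS hr _ _
      refine ⟨S, ∅, le_rfl, hS, by simp, by simp, rfl, by simp, by simp, by simp, ?_, 
        PrunableTo.refl S, by simp⟩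
      intro u _ _; rfl
  | succ c ih =>
      intro S r hS hr hdeg hsize
      obtain ⟨S', L, hle, hS', hverts, hdisj, hcard, hadj, hnsx, hnsr, hnsu, hprune, hprunex⟩ :=
        ih S r hS hr (by omega) (by omega)
      -- degree of r in S'
      have hrL : r ∉ L := by
        intro hc
        have : r ∈ (↑L ∩ S.verts : Set V) := ⟨hc, hr⟩
        rw [hdisj] at this
        exact this
      have hdr' : (S'.neighborSet r).ncard + 1 ≤ D := by
        have h1 : (S'.neighborSet r).ncard ≤ (S.neighborSet r).ncard + L.card := by
          rw [hnsr]
          calc (S.neighborSet r ∪ ↑L).ncard ≤ (S.neighborSet r).ncard + (↑L : Set V).ncard :=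
                Set.ncard_union_le _ _
            _ = (S.neighborSet r).ncard + L.card := by rw [Set.ncard_coe_finset]
        omega
      have hvertscard : S'.verts.ncard ≤ S.verts.ncard + c := by
        rw [hverts]
        calc (S.verts ∪ ↑L).ncard ≤ S.verts.ncard + (↑L : Set V).ncard := Set.ncard_union_le _ _
          _ = S.verts.ncard + c := by rw [Set.ncard_coe_finset, hcard]
      have hr' : r ∈ S'.verts := hle.1 hr
      obtain ⟨w, hwS', hadjw, hext⟩ := one_step hD hm hG hS' hr' hdr' (by omega)
      set E := G.subgraphOfAdj hadjw with hEdef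
      have hwL : w ∉ L := fun hc => hwS' (hverts ▸ Or.inr hc)
      have hwS : w ∉ S.verts := fun hc => hwS' (hverts ▸ Or.inl hc)
      have hwr : w ≠ r := fun hc => hwS' (hc ▸ hr')
      refine ⟨S' ⊔ E, insert w L, le_trans hle le_sup_left, hext, ?_, ?_, ?_, ?_, ?_, ?_, ?_, ?_, ?_⟩
      · rw [verts_sup_edge hadjw hr', hverts, Finset.coe_insert, Set.union_insert]
      · ext u
        simp only [Finset.coe_insert, Set.mem_inter_iff, Set.mem_insert_iff, Set.mem_empty_iff_false,
          iff_false, not_and]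
        rintro (rfl | huL)
        · exact hwS
        · intro hc; have : u ∈ (↑L ∩ S.verts : Set V) := ⟨huL, hc⟩; rw [hdisj] at this; exact this
      · rw [Finset.card_insert_of_notMem hwL, hcard]
      · intro x hx
        rcases Finset.mem_insert.mp hx with rfl | hx'
        · exact Or.inr (by rw [hEdef]; simp)
        · exact Or.inl (hadj x hx')
      · intro x hx
        rcases Finset.mem_insert.mp hx with rfl | hx'
        · rw [ns_sup_edge_snd hadjw, ns_eq_empty_of_not_mem_verts hwS']
          simp
        · have hxw : x ≠ w := fun hc => hwL (hc ▸ hx')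
          have hxr : x ≠ r := by
            intro hc; exact hrL (hc ▸ hx')
          rw [ns_sup_edge_other hadjw hxr hxw]
          exact hnsx x hx'
      · rw [ns_sup_edge_fst hadjw, hnsr, Finset.coe_insert, Set.union_insert]
      · intro u hur huL
        have huw : u ≠ w := fun hc => huL (by rw [hc]; exact Finset.mem_insert_self w L)
        rw [ns_sup_edge_other hadjw hur huw]
        exact hnsu u hur (fun hc => huL (Finset.mem_insert_of_mem hc))
      · exact (prunable_pendant hadjw hr' hwS').trans hprune
      · intro x hx h
        rcases Finset.mem_insert.mp hx with rfl | hx'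
        · exact hprune.sup_right (by
            rw [hEdef, subgraphOfAdj_verts]
            intro u hu
            rcases hu.1 with rfl | hu1
            · exact hr
            · rw [Set.mem_singleton_iff] at hu1
              exact absurd (hu1 ▸ hu.2) hwS')
        · exact (prunable_pendant hadjw hr' hwS').trans (hprunex x hx' h)

/-- Number of vertices of the full `(D-1)`-ary tree of depth `j` below one root child. -/
def gtree (D : ℕ) : ℕ → ℕ
  | 0 => 0
  | j + 1 => 1 + (D - 1) * gtree D j

lemma tree_lemma (hD : 3 ≤ D) (hm : 1 ≤ m) (hG : IsJoined G m) :
    ∀ (j : ℕ), 1 ≤ j → ∀ (S : G.Subgraph) (r : V) (c : ℕ), IsExtendable S D m → r ∈ S.verts →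
    1 ≤ c → (S.neighborSet r).ncard + c ≤ D →
    S.verts.ncard + c * gtree D j + 2 * D * m + 3 * m ≤ Fintype.card V →
    ∃ (S' : G.Subgraph) (N L : Finset V),
      S ≤ S' ∧ IsExtendable S' D m ∧
      S'.verts = S.verts ∪ ↑N ∧ (↑N ∩ S.verts : Set V) = ∅ ∧ N.card ≤ c * gtree D j ∧
      L ⊆ N ∧ L.card = c * (D-1)^(j-1) ∧
      (∀ u, u ≠ r → u ∉ N → S'.neighborSet u = S.neighborSet u) ∧
      PrunableTo S' S ∧
      (∀ x ∈ L, (S'.neighborSet x).ncard ≤ 1 ∧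
        ∃ p : G.Walk r x, p.IsPath ∧ p.length = j ∧ p.toSubgraph ≤ S' ∧
          (∀ y ∈ p.support, y = r ∨ y ∈ N) ∧
          PrunableTo S' (S ⊔ p.toSubgraph)) := by
  intro j
  induction j with
  | zero => omega
  | succ j ihj =>
    intro _ S r c hS hr hc1 hdeg hsize
    rcases Nat.eq_zero_or_pos j with rfl | hj1
    · -- base case: depth 1, a star
      obtain ⟨S', L, hle, hS', hverts, hdisj, hcard, hadj, hnsx, _hnsr, hnsu, hprune, hprunex⟩ :=
        star_lemma hD hm hG c S r hS hr hdeg (by simpa [gtree] using hsize)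
      refine ⟨S', L, L, hle, hS', hverts, hdisj, by simp [gtree, hcard], subset_rfl,
        by simp [hcard], fun u hur huL => hnsu u hur huL, hprune, ?_⟩
      intro x hx
      have hxS : x ∉ S.verts := by
        intro hc
        have : x ∈ (↑L ∩ S.verts : Set V) := ⟨hx, hc⟩
        rw [hdisj] at this; exact this
      have hrx : r ≠ x := fun hc => hxS (hc ▸ hr)
      have hadjx : G.Adj r x := S'.adj_sub (hadj x hx)
      refine ⟨by rw [hnsx x hx]; simp, Walk.cons hadjx Walk.nil, ?_, by simp, ?_, ?_, ?_⟩
      · exact Walk.IsPath.cons (Walk.IsPath.nil) (by simp [hrx])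
      · have h1 : (Walk.cons hadjx Walk.nil).toSubgraph
            = G.subgraphOfAdj hadjx ⊔ G.singletonSubgraph x := rfl
        rw [h1]
        refine sup_le ?_ ?_
        · have := subgraphOfAdj_le_of_adj S' (hadj x hx)
          exact this
        · rw [singletonSubgraph_le_iff]
          rw [hverts]; exact Or.inr hx
      · intro y hy
        simp only [Walk.support_cons, Walk.support_nil, List.mem_cons, List.mem_singleton] at hy
        rcases hy with rfl | (rfl | h)
        · exact Or.inl rfl
        · exact Or.inr hx
        · exact absurd h List.not_mem_nil
      · have h1 : (Walk.cons hadjx Walk.nil).toSubgraph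
            = G.subgraphOfAdj hadjx ⊔ G.singletonSubgraph x := rfl
        have h2 : G.subgraphOfAdj hadjx ⊔ G.singletonSubgraph x = G.subgraphOfAdj hadjx :=
          sup_eq_left.mpr singletonSubgraph_snd_le_subgraphOfAdj
        rw [h1, h2]
        exact hprunex x hx hadjx
    · -- inductive step: depth j+1 with j ≥ 1
      -- the inner induction over the list of children
      have inner : ∀ (ws : List V), ws.Nodup → ∀ (Sb : G.Subgraph), IsExtendable Sb D m →
          (∀ w ∈ ws, w ∈ Sb.verts) → (∀ w ∈ ws, (Sb.neighborSet w).ncard ≤ 1) →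
          Sb.verts.ncard + ws.length * ((D-1) * gtree D j) + 2*D*m + 3*m ≤ Fintype.card V →
          ∃ (S'' : G.Subgraph) (N'' L'' : Finset V),
            Sb ≤ S'' ∧ IsExtendable S'' D m ∧
            S''.verts = Sb.verts ∪ ↑N'' ∧ (↑N'' ∩ Sb.verts : Set V) = ∅ ∧
            N''.card ≤ ws.length * ((D-1) * gtree D j) ∧
            L'' ⊆ N'' ∧ L''.card = ws.length * (D-1)^j ∧
            (∀ u, u ∉ ws → u ∉ N'' → S''.neighborSet u = Sb.neighborSet u) ∧
            PrunableTo S'' Sb ∧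
            (∀ x ∈ L'', (S''.neighborSet x).ncard ≤ 1 ∧ ∃ w ∈ ws, ∃ p : G.Walk w x,
              p.IsPath ∧ p.length = j ∧ p.toSubgraph ≤ S'' ∧
              (∀ y ∈ p.support, y = w ∨ y ∈ N'') ∧
              PrunableTo S'' (Sb ⊔ p.toSubgraph)) := by
        intro ws
        induction ws with
        | nil =>
            intro _ Sb hSb _ _ _
            exact ⟨Sb, ∅, ∅, le_rfl, hSb, by simp, by simp, by simp, subset_rfl, by simp,
              fun u _ _ => rfl, PrunableTo.refl Sb, by simp⟩
        | cons w ws' ihw =>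
            intro hnd Sb hSb hmem hdeg1 hsz
            have hndup := List.nodup_cons.mp hnd
            -- grow a tree of depth j from w
            obtain ⟨S₁, N₁, L₁, hle₁, hS₁, hverts₁, hdisj₁, hcard₁, hLN₁, hLcard₁, hnsu₁,
              hprune₁, hleaf₁⟩ :=
              ihj hj1 Sb w (D-1) hSb (hmem w (by simp)) (by omega)
                (by have := hdeg1 w (by simp); omega)
                (by
                  have h1 : ws'.length * ((D-1) * gtree D j) + (D-1) * gtree D j
                      = (w :: ws').length * ((D-1) * gtree D j) := by
                    simp [List.length_cons]; ring
                  omega)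
            have hvc₁ : S₁.verts.ncard ≤ Sb.verts.ncard + (D-1) * gtree D j := by
              rw [hverts₁]
              calc (Sb.verts ∪ ↑N₁).ncard ≤ Sb.verts.ncard + (↑N₁ : Set V).ncard :=
                    Set.ncard_union_le _ _
                _ ≤ Sb.verts.ncard + (D-1) * gtree D j := by
                    rw [Set.ncard_coe_finset]; omega
            -- recurse on the remaining children
            obtain ⟨S₂, N₂, L₂, hle₂, hS₂, hverts₂, hdisj₂, hcard₂, hLN₂, hLcard₂, hnsu₂,
              hprune₂, hleaf₂⟩ :=
              ihw hndup.2 S₁ hS₁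
                (fun w' hw' => hle₁.1 (hmem w' (by simp [hw'])))
                (fun w' hw' => by
                  rw [hnsu₁ w' (fun hc => hndup.1 (hc ▸ hw'))
                    (fun hc => by
                      have : (w' : V) ∈ (↑N₁ ∩ Sb.verts : Set V) := ⟨hc, hmem w' (by simp [hw'])⟩
                      rw [hdisj₁] at this; exact this)]
                  exact hdeg1 w' (by simp [hw']))
                (by
                  have h1 : ws'.length * ((D-1) * gtree D j) + (D-1) * gtree D j
                      = (w :: ws').length * ((D-1) * gtree D j) := by
                    simp [List.length_cons]; ring
                  omega)
            have hN₁S₁ : (↑N₁ : Set V) ⊆ S₁.verts := by rw [hverts₁]; exact Set.subset_union_right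
            have hN₂N₁ : Disjoint N₁ N₂ := by
              rw [Finset.disjoint_left]
              intro x hx₁ hx₂
              have : (x : V) ∈ (↑N₂ ∩ S₁.verts : Set V) := ⟨hx₂, hN₁S₁ hx₁⟩
              rw [hdisj₂] at this; exact this
            have hL₁L₂ : Disjoint L₁ L₂ :=
              Finset.disjoint_of_subset_left hLN₁ (Finset.disjoint_of_subset_right hLN₂ hN₂N₁)
            refine ⟨S₂, N₁ ∪ N₂, L₁ ∪ L₂, le_trans hle₁ hle₂, hS₂, ?_, ?_, ?_, 
              Finset.union_subset_union hLN₁ hLN₂, ?_, ?_, (hprune₂.trans hprune₁), ?_⟩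
            · rw [hverts₂, hverts₁, Finset.coe_union, Set.union_assoc]
            · ext x
              simp only [Finset.coe_union, Set.mem_inter_iff, Set.mem_union,
                Set.mem_empty_iff_false, iff_false, not_and]
              rintro (hx | hx) hxS
              · have : (x : V) ∈ (↑N₁ ∩ Sb.verts : Set V) := ⟨hx, hxS⟩
                rw [hdisj₁] at this; exact this
              · have : (x : V) ∈ (↑N₂ ∩ S₁.verts : Set V) := ⟨hx, hle₁.1 hxS⟩
                rw [hdisj₂] at this; exact this
            · calc (N₁ ∪ N₂).card ≤ N₁.card + N₂.card := Finset.card_union_le _ _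
                _ ≤ (w :: ws').length * ((D-1) * gtree D j) := by
                    simp only [List.length_cons]
                    have : (ws'.length + 1) * ((D-1) * gtree D j)
                        = ws'.length * ((D-1) * gtree D j) + (D-1) * gtree D j := by ring
                    omega
            · rw [Finset.card_union_of_disjoint hL₁L₂, hLcard₁, hLcard₂]
              simp only [List.length_cons]
              have hjj : j - 1 + 1 = j := by omega
              have : (D-1) * (D-1)^(j-1) = (D-1)^j := by
                rw [← pow_succ']
                rw [hjj]
              rw [this]; ring
            · intro u hu huN
              rw [hnsu₂ u (fun hc => hu (by simp [hc]))
                  (fun hc => huN (Finset.mem_union_right _ hc)),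
                hnsu₁ u (fun hc => hu (by simp [hc]))
                  (fun hc => huN (Finset.mem_union_left _ hc))]
            · intro x hx
              rcases Finset.mem_union.mp hx with hx₁ | hx₂
              · obtain ⟨hdx, p, hp, hplen, hpsub, hpsupp, hpprune⟩ := hleaf₁ x hx₁
                have hxS₁ : (x:V) ∈ S₁.verts := hN₁S₁ (hLN₁ hx₁)
                have hxnws' : x ∉ ws' := by
                  intro hc
                  have hxSb : (x:V) ∈ Sb.verts := hmem x (by simp [hc])
                  have : (x : V) ∈ (↑N₁ ∩ Sb.verts : Set V) := ⟨hLN₁ hx₁, hxSb⟩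
                  rw [hdisj₁] at this; exact this
                have hxnN₂ : x ∉ N₂ := by
                  intro hc
                  have : (x : V) ∈ (↑N₂ ∩ S₁.verts : Set V) := ⟨hc, hxS₁⟩
                  rw [hdisj₂] at this; exact this
                have hnspres := hnsu₂ x hxnws' hxnN₂
                refine ⟨by rw [hnspres]; exact hdx, w, by simp, p, hp, hplen,
                  le_trans hpsub hle₂, ?_, ?_⟩
                · intro y hy
                  rcases hpsupp y hy with rfl | hyN
                  · exact Or.inl rfl
                  · exact Or.inr (Finset.mem_union_left _ hyN)
                · exact hprune₂.trans hpprune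
              · obtain ⟨hdx, hrest⟩ := hleaf₂ x hx₂
                obtain ⟨wp, hwp, prest⟩ := hrest
                obtain ⟨p, hp, hplen, hpsub, hpsupp, hpprune⟩ := prest
                refine ⟨hdx, wp, by simp [hwp], p, hp, hplen, hpsub, ?_, ?_⟩
                · intro y hy
                  rcases hpsupp y hy with rfl | hyN
                  · exact Or.inl rfl
                  · exact Or.inr (Finset.mem_union_right _ hyN)
                · -- lift the pruning of stage 1 by the path
                  have hTsub : p.toSubgraph.verts ∩ S₁.verts ⊆ Sb.verts := by
                    intro y hy
                    have hy1 := hy.1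
                    rw [Walk.verts_toSubgraph] at hy1
                    rcases hpsupp y hy1 with heq | hyN
                    · exact heq ▸ hmem wp (by simp [hwp])
                    · exfalso
                      have : (y : V) ∈ (↑N₂ ∩ S₁.verts : Set V) := ⟨hyN, hy.2⟩
                      rw [hdisj₂] at this; exact this
                  have hlift := hprune₁.sup_right (T := p.toSubgraph) hTsub
                  exact hpprune.trans hlift
      -- apply star lemma at the root, then the inner induction to its leaves
      obtain ⟨S₀, L₀, hle₀, hS₀, hverts₀, hdisj₀, hcard₀, hadj₀, hnsx₀, _hnsr₀, hnsu₀,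
        hprune₀, hprunex₀⟩ :=
        star_lemma hD hm hG c S r hS hr hdeg
          (by
            have h1 : c * gtree D (j+1) = c + c * ((D-1) * gtree D j) := by
              show c * (1 + (D-1) * gtree D j) = _
              ring
            omega)
      have hvc₀ : S₀.verts.ncard ≤ S.verts.ncard + c := by
        rw [hverts₀]
        calc (S.verts ∪ ↑L₀).ncard ≤ S.verts.ncard + (↑L₀ : Set V).ncard := Set.ncard_union_le _ _
          _ = S.verts.ncard + c := by rw [Set.ncard_coe_finset, hcard₀]
      have hL₀Sverts : ∀ x ∈ L₀, (x:V) ∉ S.verts := by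
        intro x hx hc
        have : (x : V) ∈ (↑L₀ ∩ S.verts : Set V) := ⟨hx, hc⟩
        rw [hdisj₀] at this; exact this
      obtain ⟨S₂, N₂, L₂, hle₂, hS₂, hverts₂, hdisj₂, hcard₂, hLN₂, hLcard₂, hnsu₂, hprune₂,
        hleaf₂⟩ :=
        inner L₀.toList (Finset.nodup_toList L₀) S₀ hS₀
          (fun w hw => by
            rw [Finset.mem_toList] at hw
            rw [hverts₀]; exact Or.inr hw)
          (fun w hw => by
            rw [Finset.mem_toList] at hw
            rw [hnsx₀ w hw]; simp)
          (by
            have hlen : L₀.toList.length = c := by rw [Finset.length_toList, hcard₀]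
            rw [hlen]
            have h1 : c * gtree D (j+1) = c + c * ((D-1) * gtree D j) := by
              show c * (1 + (D-1) * gtree D j) = _
              ring
            omega)
      refine ⟨S₂, L₀ ∪ N₂, L₂, le_trans hle₀ hle₂, hS₂, ?_, ?_, ?_, ?_, ?_, ?_, 
        hprune₂.trans hprune₀, ?_⟩
      · rw [hverts₂, hverts₀, Finset.coe_union, Set.union_assoc]
      · ext x
        simp only [Finset.coe_union, Set.mem_inter_iff, Set.mem_union,
          Set.mem_empty_iff_false, iff_false, not_and]
        rintro (hx | hx) hxS
        · exact hL₀Sverts x hx hxS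
        · have : (x : V) ∈ (↑N₂ ∩ S₀.verts : Set V) := ⟨hx, hle₀.1 hxS⟩
          rw [hdisj₂] at this; exact this
      · calc (L₀ ∪ N₂).card ≤ L₀.card + N₂.card := Finset.card_union_le _ _
          _ ≤ c + c * ((D-1) * gtree D j) := by
              rw [hcard₀]
              have hlen : L₀.toList.length = c := by rw [Finset.length_toList, hcard₀]
              rw [hlen] at hcard₂
              omega
          _ = c * gtree D (j+1) := by
              show _ = c * (1 + (D-1) * gtree D j)
              ring
      · exact le_trans hLN₂ Finset.subset_union_right
      · rw [hLcard₂, Finset.length_toList, hcard₀]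
        simp
      · intro u hur huN
        rw [hnsu₂ u (fun hc => huN (Finset.mem_union_left _ (Finset.mem_toList.mp hc)))
            (fun hc => huN (Finset.mem_union_right _ hc)),
          hnsu₀ u hur (fun hc => huN (Finset.mem_union_left _ hc))]
      · intro x hx
        obtain ⟨hdx, w, hw, p, hp, hplen, hpsub, hpsupp, hpprune⟩ := hleaf₂ x hx
        rw [Finset.mem_toList] at hw
        have hrw : G.Adj r w := S₀.adj_sub (hadj₀ w hw)
        have hrS₀ : r ∈ S₀.verts := hle₀.1 hr
        have hrnN₂ : (r:V) ∉ N₂ := by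
          intro hc
          have : (r : V) ∈ (↑N₂ ∩ S₀.verts : Set V) := ⟨hc, hrS₀⟩
          rw [hdisj₂] at this; exact this
        have hrnsupp : r ∉ p.support := by
          intro hc
          rcases hpsupp r hc with heq | hyN
          · exact hL₀Sverts w hw (heq ▸ hr)
          · exact hrnN₂ hyN
        refine ⟨hdx, Walk.cons hrw p, Walk.IsPath.cons hp hrnsupp, by simp [hplen], ?_, ?_, ?_⟩
        · have h1 : (Walk.cons hrw p).toSubgraph = G.subgraphOfAdj hrw ⊔ p.toSubgraph := rfl
          rw [h1]
          exact sup_le (le_trans (subgraphOfAdj_le_of_adj S₀ (hadj₀ w hw)) hle₂) hpsub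
        · intro y hy
          rw [Walk.support_cons] at hy
          rcases List.mem_cons.mp hy with rfl | hy'
          · exact Or.inl rfl
          · rcases hpsupp y hy' with rfl | hyN
            · exact Or.inr (Finset.mem_union_left _ hw)
            · exact Or.inr (Finset.mem_union_right _ hyN)
        · -- pruning: first prune down to S₀ ⊔ p, then lift the star pruning
          have hTsub : p.toSubgraph.verts ∩ S₀.verts ⊆ (S ⊔ G.subgraphOfAdj hrw).verts := by
            intro y hy
            have hy1 := hy.1
            rw [Walk.verts_toSubgraph] at hy1
            rcases hpsupp y hy1 with rfl | hyN
            · exact Or.inr (by rw [subgraphOfAdj_verts]; exact Or.inr rfl)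
            · exfalso
              have : (y : V) ∈ (↑N₂ ∩ S₀.verts : Set V) := ⟨hyN, hy.2⟩
              rw [hdisj₂] at this; exact this
          have hlift := (hprunex₀ w hw hrw).sup_right (T := p.toSubgraph) hTsub
          have hassoc : (S ⊔ G.subgraphOfAdj hrw) ⊔ p.toSubgraph
              = S ⊔ (Walk.cons hrw p).toSubgraph := by
            rw [sup_assoc]; rfl
          rw [hassoc] at hlift
          exact (hpprune.trans hlift)

lemma path_lemma (hD : 3 ≤ D) (hm : 1 ≤ m) (hG : IsJoined G m) :
    ∀ (t : ℕ) (S : G.Subgraph) (v : V), IsExtendable S D m → v ∈ S.verts →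
    2 * (S.neighborSet v).ncard ≤ D →
    S.verts.ncard + t + 2*D*m + 3*m ≤ Fintype.card V →
    ∃ (v' : V) (p : G.Walk v v'),
      IsExtendable (S ⊔ p.toSubgraph) D m ∧
      p.IsPath ∧ p.length = t ∧
      (∀ y ∈ p.support, y = v ∨ y ∉ S.verts) ∧
      (S ⊔ p.toSubgraph).verts.ncard ≤ S.verts.ncard + t ∧
      2 * ((S ⊔ p.toSubgraph).neighborSet v').ncard ≤ D ∧
      (∀ u, u ∈ S.verts → u ≠ v → (S ⊔ p.toSubgraph).neighborSet u = S.neighborSet u) := by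
  intro t
  induction t with
  | zero =>
      intro S v hS hv hdv _
      have hnil : (Walk.nil : G.Walk v v).toSubgraph = G.singletonSubgraph v := rfl
      have hsup : S ⊔ (Walk.nil : G.Walk v v).toSubgraph = S := by
        rw [hnil, sup_eq_left, singletonSubgraph_le_iff]
        exact hv
      refine ⟨v, Walk.nil, by rw [hsup]; exact hS, Walk.IsPath.nil, rfl, ?_,
        by rw [hsup]; omega, by rw [hsup]; exact hdv, ?_⟩
      · intro y hy
        rw [Walk.support_nil, List.mem_singleton] at hy
        exact Or.inl hy
      · intro u _ _; rw [hsup]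
  | succ t iht =>
      intro S v hS hv hdv hsize
      obtain ⟨v', p, hS₁, hp, hplen, hpsupp, hcard₁, hdv', hpres⟩ :=
        iht S v hS hv hdv (by omega)
      set S₁ := S ⊔ p.toSubgraph with hS₁def
      have hv'S₁ : v' ∈ S₁.verts := by
        rw [hS₁def, Subgraph.verts_sup]
        exact Or.inr (by rw [Walk.verts_toSubgraph]; exact p.end_mem_support)
      have hd1 : (S₁.neighborSet v').ncard + 1 ≤ D := by omega
      obtain ⟨w, hwS₁, hadj, hext⟩ := one_step hD hm hG hS₁ hv'S₁ hd1 (by omega)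
      have hsupp_sub : ∀ y ∈ p.support, y ∈ S₁.verts := by
        intro y hy
        rw [hS₁def, Subgraph.verts_sup]
        exact Or.inr (by rw [Walk.verts_toSubgraph]; exact hy)
      have hwsupp : w ∉ p.support := fun hc => hwS₁ (hsupp_sub w hc)
      refine ⟨w, p.concat hadj, ?_, ?_, ?_, ?_, ?_, ?_, ?_⟩
      · -- extendability, after rewriting the subgraph
        have heq : S ⊔ (p.concat hadj).toSubgraph = S₁ ⊔ G.subgraphOfAdj hadj := by
          rw [Walk.concat_eq_append, Walk.toSubgraph_append, hS₁def, sup_assoc]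
          congr 1
          have h1 : (Walk.cons hadj Walk.nil).toSubgraph
              = G.subgraphOfAdj hadj ⊔ G.singletonSubgraph w := rfl
          rw [h1, sup_eq_left.mpr singletonSubgraph_snd_le_subgraphOfAdj]
        rw [heq]
        exact hext
      · rw [Walk.isPath_def, Walk.support_concat]
        exact List.Nodup.append hp.support_nodup (List.nodup_singleton w)
          (fun a ha hb => hwsupp ((List.mem_singleton.mp hb) ▸ ha))
      · rw [Walk.length_concat, hplen]
      · intro y hy
        rw [Walk.support_concat, List.mem_append,
          List.mem_singleton] at hy
        rcases hy with hy | rfl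
        · exact hpsupp y hy
        · right
          intro hc
          exact hwS₁ (hS₁def ▸ (Subgraph.verts_sup S p.toSubgraph ▸ Or.inl hc))
      · have heq : S ⊔ (p.concat hadj).toSubgraph = S₁ ⊔ G.subgraphOfAdj hadj := by
          rw [Walk.concat_eq_append, Walk.toSubgraph_append, hS₁def, sup_assoc]
          congr 1
          have h1 : (Walk.cons hadj Walk.nil).toSubgraph
              = G.subgraphOfAdj hadj ⊔ G.singletonSubgraph w := rfl
          rw [h1, sup_eq_left.mpr singletonSubgraph_snd_le_subgraphOfAdj]
        rw [heq, verts_sup_edge hadj hv'S₁,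
          Set.ncard_insert_of_notMem hwS₁ (Set.toFinite _)]
        omega
      · have heq : S ⊔ (p.concat hadj).toSubgraph = S₁ ⊔ G.subgraphOfAdj hadj := by
          rw [Walk.concat_eq_append, Walk.toSubgraph_append, hS₁def, sup_assoc]
          congr 1
          have h1 : (Walk.cons hadj Walk.nil).toSubgraph
              = G.subgraphOfAdj hadj ⊔ G.singletonSubgraph w := rfl
          rw [h1, sup_eq_left.mpr singletonSubgraph_snd_le_subgraphOfAdj]
        rw [heq, card_ns_sup_edge_snd hadj hwS₁]
        omega
      · intro u huS huv
        have heq : S ⊔ (p.concat hadj).toSubgraph = S₁ ⊔ G.subgraphOfAdj hadj := by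
          rw [Walk.concat_eq_append, Walk.toSubgraph_append, hS₁def, sup_assoc]
          congr 1
          have h1 : (Walk.cons hadj Walk.nil).toSubgraph
              = G.subgraphOfAdj hadj ⊔ G.singletonSubgraph w := rfl
          rw [h1, sup_eq_left.mpr singletonSubgraph_snd_le_subgraphOfAdj]
        have huw : u ≠ w := by
          intro hc
          exact hwS₁ (hc ▸ (hS₁def ▸ (Subgraph.verts_sup S p.toSubgraph ▸ Or.inl huS)))
        have huv' : u ≠ v' := by
          rcases hpsupp v' p.end_mem_support with heqv | hnS
          · rw [heqv]; exact huv
          · intro hc; exact hnS (hc ▸ huS)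
        rw [heq, ns_sup_edge_other hadj huv' huw]
        exact hpres u huS huv

lemma gtree_le (hD : 3 ≤ D) : ∀ j, 1 ≤ j → gtree D j ≤ 2 * (D-1)^(j-1) - 1 := by
  intro j
  induction j with
  | zero => omega
  | succ j ih =>
      intro _
      rcases Nat.eq_zero_or_pos j with rfl | hj
      · simp [gtree]
      · have h1 := ih hj
        show 1 + (D - 1) * gtree D j ≤ 2 * (D-1)^(j+1-1) - 1
        have h2 : (D-1) * gtree D j ≤ (D-1) * (2 * (D-1)^(j-1) - 1) :=
          Nat.mul_le_mul_left _ h1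
        have h3 : 1 ≤ (D-1)^(j-1) := Nat.one_le_pow _ _ (by omega)
        have h4 : (D-1) * (2 * (D-1)^(j-1) - 1) = 2 * ((D-1) * (D-1)^(j-1)) - (D-1) := by
          rw [Nat.mul_sub]
          ring_nf
        have h5 : (D-1) * (D-1)^(j-1) = (D-1)^j := by
          conv_rhs => rw [show j = j - 1 + 1 by omega]
          rw [pow_succ']
        rw [h5] at h4
        have h7 : j + 1 - 1 = j := by omega
        rw [h7]
        have h8 : 1 ≤ (D-1)^j := Nat.one_le_pow _ _ (by omega)
        omega

lemma Walk.IsPath.append' {u v w : V} {p : G.Walk u v} {q : G.Walk v w}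
    (hp : p.IsPath) (hq : q.IsPath) (h : ∀ z ∈ p.support, z ∈ q.support → z = v) :
    (p.append q).IsPath := by
  rw [Walk.isPath_def, Walk.support_append]
  refine List.Nodup.append hp.support_nodup ?_ ?_
  · exact List.Nodup.sublist (List.tail_sublist _) hq.support_nodup
  · intro z hz hz'
    have hzq : z ∈ q.support := by
      rw [q.support_eq_cons]
      exact List.mem_cons_of_mem _ hz'
    have hzv : z = v := h z hz hzq
    have : v ∉ q.support.tail := by
      have h2 := hq.support_nodup
      rw [q.support_eq_cons] at h2
      exact (List.nodup_cons.mp h2).1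
    exact this (hzv ▸ hz')

end Build

end ConnAux

open ConnAux

/-- Lemma 2.8 (connecting lemma): let `D ≥ 3`, `k = ⌈log(2m)/log(D−1)⌉` and
`ℓ ≥ 2k+1`. If `G` is `m`-joined and contains a `(D,m)`-extendable subgraph `S`
with `|S| ≤ |G| − 10Dm − (ℓ−2k−1)`, and `a ≠ b` are vertices of `S` with
`d_S(a), d_S(b) ≤ D/2`, then there is an `a,b`-path `P` of length `ℓ` whose
internal vertices lie outside `S` and such that `S + P` is `(D,m)`-extendable. -/
theorem extendable_connecting_lemma (D m ℓ k : ℕ) (hD : 3 ≤ D)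
    (hk : k = ⌈Real.log (2 * (m : ℝ)) / Real.log ((D : ℝ) - 1)⌉₊)
    (hℓ : 2 * k + 1 ≤ ℓ)
    (V : Type) [Fintype V] (G : SimpleGraph V) (hG : IsJoined G m)
    (S : G.Subgraph) (hS : IsExtendable S D m)
    (hsize : (S.verts.ncard : ℤ) ≤
      (Fintype.card V : ℤ) - 10 * (D : ℤ) * (m : ℤ) - ((ℓ : ℤ) - 2 * (k : ℤ) - 1))
    (a b : V) (ha : a ∈ S.verts) (hb : b ∈ S.verts) (hab : a ≠ b)
    (hda : 2 * (S.neighborSet a).ncard ≤ D) (hdb : 2 * (S.neighborSet b).ncard ≤ D) :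
    ∃ P : G.Walk a b, P.IsPath ∧ P.length = ℓ ∧
      (∀ v ∈ P.support, v ≠ a → v ≠ b → v ∉ S.verts) ∧
      IsExtendable (S ⊔ P.toSubgraph) D m := by
  classical
  rcases Nat.eq_zero_or_pos m with rfl | hm
  · obtain ⟨a0, ha0, -⟩ := hG ∅ ∅ (by simp) (by simp) (by simp)
    simp at ha0
  -- basic real-log facts
  have hDR : (3:ℝ) ≤ (D:ℝ) := by exact_mod_cast hD
  have hD1R : (1:ℝ) < (D:ℝ) - 1 := by linarith
  have hlogD : 0 < Real.log ((D:ℝ) - 1) := Real.log_pos hD1R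
  have hmR : (1:ℝ) ≤ (m:ℝ) := by exact_mod_cast hm
  have h2m1R : (1:ℝ) < 2 * (m:ℝ) := by linarith
  have hk1 : 1 ≤ k := by
    have : 0 < ⌈Real.log (2 * (m : ℝ)) / Real.log ((D : ℝ) - 1)⌉₊ :=
      Nat.ceil_pos.mpr (div_pos (Real.log_pos h2m1R) hlogD)
    omega
  have hcastpow : ∀ n : ℕ, (((D-1)^n : ℕ) : ℝ) = ((D:ℝ) - 1)^n := by
    intro n
    push_cast [Nat.cast_sub (by omega : 1 ≤ D)]
    ring
  have hpow : 2 * m ≤ (D-1)^k := by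
    have h1 : Real.log (2*(m:ℝ)) / Real.log ((D:ℝ)-1) ≤ (k:ℝ) := by
      rw [hk]; exact Nat.le_ceil _
    have h2 : Real.log (2*(m:ℝ)) ≤ (k:ℝ) * Real.log ((D:ℝ)-1) := by
      rwa [div_le_iff₀ hlogD] at h1
    have h3 : Real.log (2*(m:ℝ)) ≤ Real.log (((D:ℝ)-1)^k) := by
      rw [Real.log_pow]; exact_mod_cast h2
    have h4 : (2*(m:ℝ)) ≤ ((D:ℝ)-1)^k := by
      have hpos : (0:ℝ) < 2*(m:ℝ) := by linarith
      have hpos2 : (0:ℝ) < ((D:ℝ)-1)^k := pow_pos (by linarith) k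
      exact (Real.log_le_log_iff hpos hpos2).mp h3
    rw [← hcastpow k] at h4
    exact_mod_cast h4
  have hpow' : (D-1)^(k-1) < 2 * m := by
    by_contra hcon
    push_neg at hcon
    have h1 : (2*(m:ℝ)) ≤ ((D:ℝ)-1)^(k-1) := by
      rw [← hcastpow (k-1)]
      exact_mod_cast hcon
    have h2 : Real.log (2*(m:ℝ)) ≤ ((k-1:ℕ):ℝ) * Real.log ((D:ℝ)-1) := by
      rw [← Real.log_pow]
      have hpos : (0:ℝ) < 2*(m:ℝ) := by linarith
      exact Real.log_le_log (by linarith) h1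
    have h3 : Real.log (2*(m:ℝ)) / Real.log ((D:ℝ)-1) ≤ ((k-1:ℕ):ℝ) := by
      rwa [div_le_iff₀ hlogD]
    have h4 : ⌈Real.log (2*(m:ℝ)) / Real.log ((D:ℝ)-1)⌉₊ ≤ k - 1 := Nat.ceil_le.mpr h3
    rw [← hk] at h4
    omega
  -- arithmetic bookkeeping
  obtain ⟨Q, hQ⟩ : ∃ q, q = D * m := ⟨_, rfl⟩
  have hQ3 : 3 * m ≤ Q := by rw [hQ]; exact Nat.mul_le_mul_right m hD
  have hQm : m ≤ Q := by omega
  have hq2 : 2*D*m = 2*Q := by rw [mul_assoc, ← hQ]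
  set t := ℓ - 2*k - 1 with ht
  have hsizeN : S.verts.ncard + 10*Q + t ≤ Fintype.card V := by
    have hQcast : (Q:ℤ) = (D:ℤ) * m := by rw [hQ]; push_cast; ring
    have h10 : 10 * (D:ℤ) * (m:ℤ) = 10 * (Q:ℤ) := by rw [hQcast]; ring
    rw [h10] at hsize
    omega
  -- the bound on tree sizes
  have hTB : ∀ c, c ≤ D - 1 → c * gtree D k ≤ (D-1)*(4*m-3) := by
    intro c hc
    have h1 := gtree_le hD k hk1
    have h2 : (D-1)^(k-1) ≤ 2*m - 1 := by omega
    calc c * gtree D k ≤ (D-1) * (2*(D-1)^(k-1) - 1) := Nat.mul_le_mul hc h1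
      _ ≤ (D-1) * (4*m-3) := Nat.mul_le_mul_left _ (by omega)
  have hTBD : 2*((D-1)*(4*m-3)) + 2*Q + 3*m ≤ 10*Q := by
    have h43 : 3 ≤ 4*m := by omega
    have hc1 : (((D-1)*(4*m-3) : ℕ) : ℤ) = ((D:ℤ)-1)*(4*(m:ℤ)-3) := by
      push_cast [Nat.cast_sub h43, Nat.cast_sub (by omega : 1 ≤ D)]
      ring
    have hDZ : (3:ℤ) ≤ (D:ℤ) := by exact_mod_cast hD
    have hmZ : (1:ℤ) ≤ (m:ℤ) := by exact_mod_cast hm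
    have hQZ : (Q:ℤ) = (D:ℤ) * m := by rw [hQ]; push_cast; ring
    have : (2:ℤ)*(((D:ℤ)-1)*(4*(m:ℤ)-3)) + 2*(Q:ℤ) + 3*(m:ℤ) ≤ 10*(Q:ℤ) := by
      rw [hQZ]; nlinarith
    rw [← hc1] at this
    exact_mod_cast this
  obtain ⟨TBv, hTBvdef⟩ : ∃ z, z = (D-1)*(4*m-3) := ⟨_, rfl⟩
  rw [← hTBvdef] at hTB hTBD
  -- Phase 1 : grow a path of length t from a
  obtain ⟨a', p₀, hS₁ext, hp₀, hp₀len, hp₀supp, hS₁card, hda', hS₁pres⟩ :=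
    path_lemma hD hm hG t S a hS ha hda (by rw [hq2]; omega)
  set S₁ := S ⊔ p₀.toSubgraph with hS₁def
  have ha'S₁ : a' ∈ S₁.verts := by
    rw [hS₁def, Subgraph.verts_sup]
    exact Or.inr (by rw [Walk.verts_toSubgraph]; exact p₀.end_mem_support)
  have hp₀subverts : ∀ z ∈ p₀.support, z ∈ S₁.verts := by
    intro z hz
    rw [hS₁def, Subgraph.verts_sup]
    exact Or.inr (by rw [Walk.verts_toSubgraph]; exact hz)
  have hSsubS₁ : S.verts ⊆ S₁.verts := by
    rw [hS₁def, Subgraph.verts_sup]; exact Set.subset_union_left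
  set da' := (S₁.neighborSet a').ncard with hda'def
  set ca := min (D - da') (D - 1) with hcadef
  -- Phase 2 : grow a tree of depth k from a'
  obtain ⟨S₂, NA, LA, hle₂, hS₂ext, hverts₂, hdisj₂, hNAcard, hLANA, hLAcard, hpres₂,
    hprune₂, hleafA⟩ :=
    tree_lemma hD hm hG k hk1 S₁ a' ca hS₁ext ha'S₁ (by omega) (by omega)
      (by
        have h1 : ca * gtree D k ≤ TBv := hTB ca (by omega)
        obtain ⟨z, hz⟩ : ∃ z, z = ca * gtree D k := ⟨_, rfl⟩
        rw [← hz] at h1 ⊢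
        rw [hq2]
        omega)
  have hNAS₂ : (↑NA : Set V) ⊆ S₂.verts := by rw [hverts₂]; exact Set.subset_union_right
  have hNAnotS₁ : ∀ z ∈ NA, (z:V) ∉ S₁.verts := by
    intro z hz hc
    have : (z : V) ∈ (↑NA ∩ S₁.verts : Set V) := ⟨hz, hc⟩
    rw [hdisj₂] at this; exact this
  have hS₁subS₂ : S₁.verts ⊆ S₂.verts := hle₂.1
  have hLAm : m ≤ LA.card := by
    have hP1 : (D-1)*(D-1)^(k-1) = (D-1)^k := by
      conv_rhs => rw [show k = k - 1 + 1 by omega]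
      rw [pow_succ']
    have hle1 : (D-1)^k ≤ 2*(ca*(D-1)^(k-1)) := by
      calc (D-1)^k = (D-1)*(D-1)^(k-1) := hP1.symm
        _ ≤ (2*ca)*(D-1)^(k-1) := Nat.mul_le_mul_right _ (by omega)
        _ = 2*(ca*(D-1)^(k-1)) := by ring
    rw [hLAcard]
    omega
  -- facts about b before growing the second tree
  have hba : b ≠ a := hab.symm
  have ha'cases : a' = a ∨ a' ∉ S.verts := hp₀supp a' p₀.end_mem_support
  have hba' : b ≠ a' := by
    rcases ha'cases with rfl | h
    · exact hab.symm
    · intro hc; exact h (hc ▸ hb)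
  have hbNA : b ∉ NA := fun hc => hNAnotS₁ b hc (hSsubS₁ hb)
  have hnsb₂ : S₂.neighborSet b = S.neighborSet b := by
    rw [hpres₂ b hba' hbNA, hS₁pres b hb hba]
  set db := (S.neighborSet b).ncard with hdbdef
  set cb := min (D - db) (D - 1) with hcbdef
  have hbS₂ : b ∈ S₂.verts := hS₁subS₂ (hSsubS₁ hb)
  have hS₂card : S₂.verts.ncard ≤ S.verts.ncard + t + TBv := by
    have h1 : S₂.verts.ncard ≤ S₁.verts.ncard + NA.card := by
      rw [hverts₂]
      calc (S₁.verts ∪ ↑NA).ncard ≤ S₁.verts.ncard + (↑NA : Set V).ncard :=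
            Set.ncard_union_le _ _
        _ = S₁.verts.ncard + NA.card := by rw [Set.ncard_coe_finset]
    have h2 : NA.card ≤ TBv := le_trans hNAcard (hTB ca (by omega))
    omega
  -- Phase 3 : grow a tree of depth k from b
  obtain ⟨S₃, NB, LB, hle₃, hS₃ext, hverts₃, hdisj₃, hNBcard, hLBNB, hLBcard, hpres₃,
    hprune₃, hleafB⟩ :=
    tree_lemma hD hm hG k hk1 S₂ b cb hS₂ext hbS₂ (by omega)
      (by rw [hnsb₂, ← hdbdef]; omega)
      (by
        have h1 : cb * gtree D k ≤ TBv := hTB cb (by omega)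
        obtain ⟨z, hz⟩ : ∃ z, z = cb * gtree D k := ⟨_, rfl⟩
        rw [← hz] at h1 ⊢
        rw [hq2]
        omega)
  have hNBnotS₂ : ∀ z ∈ NB, (z:V) ∉ S₂.verts := by
    intro z hz hc
    have : (z : V) ∈ (↑NB ∩ S₂.verts : Set V) := ⟨hz, hc⟩
    rw [hdisj₃] at this; exact this
  have hLBm : m ≤ LB.card := by
    have hP1 : (D-1)*(D-1)^(k-1) = (D-1)^k := by
      conv_rhs => rw [show k = k - 1 + 1 by omega]
      rw [pow_succ']
    have hdb2 : 2 * db ≤ D := hdb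
    have hle1 : (D-1)^k ≤ 2*(cb*(D-1)^(k-1)) := by
      calc (D-1)^k = (D-1)*(D-1)^(k-1) := hP1.symm
        _ ≤ (2*cb)*(D-1)^(k-1) := Nat.mul_le_mul_right _ (by omega)
        _ = 2*(cb*(D-1)^(k-1)) := by ring
    rw [hLBcard]
    omega
  -- Phase 4 : connect the two leaf sets
  obtain ⟨A, hAsub, hAcard⟩ := Finset.exists_subset_card_eq hLAm
  obtain ⟨B, hBsub, hBcard⟩ := Finset.exists_subset_card_eq hLBm
  have hdisjAB : Disjoint A B := by
    rw [Finset.disjoint_left]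
    intro z hzA hzB
    exact hNBnotS₂ z (hLBNB (hBsub hzB)) (hNAS₂ (hLANA (hAsub hzA)))
  obtain ⟨x, hxA, y, hyB, hxy⟩ := hG A B hdisjAB hAcard hBcard
  have hxLA : x ∈ LA := hAsub hxA
  have hyLB : y ∈ LB := hBsub hyB
  obtain ⟨hdx₂, p_a, hpa, hpalen, hpasub, hpasupp, hpaprune⟩ := hleafA x hxLA
  obtain ⟨hdy₃, p_b, hpb, hpblen, hpbsub, hpbsupp, hpbprune⟩ := hleafB y hyLB
  have hxNA : x ∈ NA := hLANA hxLA
  have hyNB : y ∈ NB := hLBNB hyLB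
  have hxS₂ : x ∈ S₂.verts := hNAS₂ hxNA
  have hxb : x ≠ b := by
    intro hc; exact hNAnotS₁ x hxNA (hc ▸ (hSsubS₁ hb))
  have hxNB : x ∉ NB := fun hc => hNBnotS₂ x hc hxS₂
  -- Phase 5 : prune back to the two paths
  have hTv : p_b.toSubgraph.verts ∩ S₂.verts ⊆ (S₁ ⊔ p_a.toSubgraph).verts := by
    intro z hz
    have hz1 := hz.1
    rw [Walk.verts_toSubgraph] at hz1
    rcases hpbsupp z hz1 with heq | hzN
    · exact Or.inl (heq ▸ (hSsubS₁ hb))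
    · exact absurd hz.2 (hNBnotS₂ z hzN)
  have hlift := hpaprune.sup_right (T := p_b.toSubgraph) hTv
  have hprune4 : PrunableTo S₃ ((S₁ ⊔ p_a.toSubgraph) ⊔ p_b.toSubgraph) :=
    hpbprune.trans hlift
  set S₄ := (S₁ ⊔ p_a.toSubgraph) ⊔ p_b.toSubgraph with hS₄def
  have hS₄ext : IsExtendable S₄ D m := hprune4.extendable hS₃ext
  have hle₄ : S₄ ≤ S₃ := hprune4.le
  -- Phase 6 : add the connecting edge
  have hxS₄ : x ∈ S₄.verts := by
    rw [hS₄def, Subgraph.verts_sup, Subgraph.verts_sup]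
    exact Or.inl (Or.inr (by rw [Walk.verts_toSubgraph]; exact p_a.end_mem_support))
  have hyS₄ : y ∈ S₄.verts := by
    rw [hS₄def, Subgraph.verts_sup]
    exact Or.inr (by rw [Walk.verts_toSubgraph]; exact p_b.end_mem_support)
  have hnsmono : ∀ (X Y : G.Subgraph) (u : V), X ≤ Y → X.neighborSet u ⊆ Y.neighborSet u :=
    fun X Y u hXY z hz => hXY.2 hz
  have hdx₄ : (S₄.neighborSet x).ncard + 1 ≤ D := by
    have h1 : (S₃.neighborSet x) = (S₂.neighborSet x) := hpres₃ x hxb hxNB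
    have h2 : (S₄.neighborSet x).ncard ≤ (S₃.neighborSet x).ncard :=
      Set.ncard_le_ncard (hnsmono _ _ _ hle₄) (Set.toFinite _)
    rw [h1] at h2
    omega
  have hdy₄ : (S₄.neighborSet y).ncard + 1 ≤ D := by
    have h2 : (S₄.neighborSet y).ncard ≤ (S₃.neighborSet y).ncard :=
      Set.ncard_le_ncard (hnsmono _ _ _ hle₄) (Set.toFinite _)
    omega
  have hS₅ext : IsExtendable (S₄ ⊔ G.subgraphOfAdj hxy) D m :=
    add_edge_extendable hS₄ext hxy hxS₄ hyS₄ hdx₄ hdy₄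
  -- Phase 7 : assemble the path
  set q2 : G.Walk x b := Walk.cons hxy p_b.reverse with hq2def
  set P : G.Walk a b := (p₀.append p_a).append q2 with hPdef
  have hq1path : (p₀.append p_a).IsPath := by
    refine Walk.IsPath.append' hp₀ hpa ?_
    intro z hz hz'
    rcases hpasupp z hz' with heq | hzN
    · exact heq
    · exact absurd (hp₀subverts z hz) (hNAnotS₁ z hzN)
  have hq2path : q2.IsPath := by
    refine Walk.IsPath.cons hpb.reverse ?_
    rw [Walk.support_reverse, List.mem_reverse]
    intro hc
    rcases hpbsupp x hc with heq | hzN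
    · exact hxb heq
    · exact hxNB hzN
  have hPpath : P.IsPath := by
    refine Walk.IsPath.append' hq1path hq2path ?_
    intro z hz hz'
    rw [hq2def, Walk.support_cons] at hz'
    rcases List.mem_cons.mp hz' with rfl | hz''
    · rfl
    · rw [Walk.support_reverse, List.mem_reverse] at hz''
      exfalso
      have hzS₂ : z ∈ S₂.verts := by
        rcases (Walk.mem_support_append_iff _ _).mp hz with h0 | hA
        · exact hS₁subS₂ (hp₀subverts z h0)
        · rcases hpasupp z hA with heq | hzN
          · exact hS₁subS₂ (heq ▸ ha'S₁)
          · exact hNAS₂ hzN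
      rcases hpbsupp z hz'' with heq | hzN
      · -- z = b
        subst heq
        rcases (Walk.mem_support_append_iff _ _).mp hz with h0 | hA
        · rcases hp₀supp z h0 with heq2 | hnS
          · exact hba heq2
          · exact hnS hb
        · rcases hpasupp z hA with heq2 | hzN
          · exact hba' heq2
          · exact hbNA hzN
      · exact hNBnotS₂ z hzN hzS₂
  have hPlen : P.length = ℓ := by
    rw [hPdef, Walk.length_append, Walk.length_append, hq2def, Walk.length_cons,
      Walk.length_reverse, hp₀len, hpalen, hpblen]
    omega
  have hPsupp : ∀ v ∈ P.support, v ≠ a → v ≠ b → v ∉ S.verts := by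
    intro v hv hva hvb
    rw [hPdef] at hv
    rcases (Walk.mem_support_append_iff _ _).mp hv with hv1 | hv2
    · rcases (Walk.mem_support_append_iff _ _).mp hv1 with h0 | hA
      · rcases hp₀supp v h0 with heq | hnS
        · exact absurd heq hva
        · exact hnS
      · rcases hpasupp v hA with heq | hzN
        · rcases ha'cases with ha'a | ha'nS
          · exact absurd (heq.trans ha'a) hva
          · exact heq ▸ ha'nS
        · exact fun hc => hNAnotS₁ v hzN (hSsubS₁ hc)
    · rw [hq2def, Walk.support_cons] at hv2
      rcases List.mem_cons.mp hv2 with rfl | hv3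
      · exact fun hc => hNAnotS₁ v hxNA (hSsubS₁ hc)
      · rw [Walk.support_reverse, List.mem_reverse] at hv3
        rcases hpbsupp v hv3 with heq | hzN
        · exact absurd heq hvb
        · exact fun hc => hNBnotS₂ v hzN (hS₁subS₂ (hSsubS₁ hc))
  -- Phase 8 : identify the subgraphs
  have hPsub : S ⊔ P.toSubgraph = S₄ ⊔ G.subgraphOfAdj hxy := by
    have h1 : q2.toSubgraph = G.subgraphOfAdj hxy ⊔ p_b.toSubgraph := by
      rw [hq2def]
      show G.subgraphOfAdj hxy ⊔ p_b.reverse.toSubgraph = _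
      rw [Walk.toSubgraph_reverse]
    rw [hPdef, Walk.toSubgraph_append, Walk.toSubgraph_append, h1, hS₄def, hS₁def]
    have : ∀ (X A B C E : G.Subgraph), X ⊔ (A ⊔ B ⊔ (E ⊔ C)) = X ⊔ A ⊔ B ⊔ C ⊔ E := by
      intro X A B C E
      simp only [sup_assoc]
      rw [sup_comm E C]
    exact this S p₀.toSubgraph p_a.toSubgraph p_b.toSubgraph (G.subgraphOfAdj hxy)
  exact ⟨P, hPpath, hPlen, hPsupp, by rw [hPsub]; exact hS₅ext⟩
end

section
/- If G is an m-joined graph, then G contains a path of length at least |V(G)| − 2m. -/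
/-!
Run a depth-first search, keeping the stack as a path `P`, the finished vertices in `U` and the
unexplored ones in `W`. No edge joins `U` to `W`, and every step moves a vertex from `W` onto `P` or
from `P` into `U`, raising the potential `2|U| + length P`. Take a state maximizing the potential
among those with `|U| ≤ m`. If `|U| < m` the search cannot go on, so `W = ∅`; if `|U| = m`, then
`|W| < m` as `G` is `m`-joined. Either way `|U| + |W| < 2m`, and `P` covers the remaining
`|V| - |U| - |W|` vertices.
-/

open SimpleGraph

theorem IsJoined.card_lt_of_forall_not_adj {V : Type*} {G : SimpleGraph V} {m : ℕ}
    (hG : IsJoined G m) {A B : Finset V} (hAB : Disjoint A B) (hA : A.card = m)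
    (hno : ∀ a ∈ A, ∀ b ∈ B, ¬ G.Adj a b) : B.card < m := by
  by_contra! h
  obtain ⟨B', hB'B, hB'⟩ := Finset.exists_subset_card_eq h
  obtain ⟨a, ha, b, hb, hab⟩ := hG A B' (hAB.mono_right hB'B) hA hB'
  exact hno a ha b (hB'B hb) hab

/-- A depth-first search in progress: `path` is the stack, with its top at `start`, and `done`
is the set of finished vertices, all of whose neighbours have been visited. -/
structure DfsState {V : Type*} (G : SimpleGraph V) where
  start : V
  bottom : V
  path : G.Walk start bottom
  isPath : path.IsPath
  done : Finset V
  notMem_support : ∀ x ∈ done, x ∉ path.support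
  adj_done : ∀ a ∈ done, ∀ b, G.Adj a b → b ∈ done ∨ b ∈ path.support

namespace DfsState

variable {V : Type*} [DecidableEq V] {G : SimpleGraph V}

def initial (v : V) : DfsState G where
  start := v
  bottom := v
  path := .nil
  isPath := .nil
  done := ∅
  notMem_support := by simp
  adj_done := by simp

variable [Fintype V] (s : DfsState G)

def unexplored : Finset V := (s.path.support.toFinset ∪ s.done)ᶜ

def potential : ℕ := 2 * s.done.card + s.path.length

lemma mem_unexplored {w : V} : w ∈ s.unexplored ↔ w ∉ s.path.support ∧ w ∉ s.done := by
  simp [unexplored]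

lemma card_unexplored_add_card_done :
    s.unexplored.card + (s.path.length + 1) + s.done.card = Fintype.card V := by
  have hdisj : Disjoint s.path.support.toFinset s.done :=
    Finset.disjoint_right.2 fun x hx hxP ↦ s.notMem_support x hx (List.mem_toFinset.1 hxP)
  have hunion : (s.path.support.toFinset ∪ s.done).card = s.path.length + 1 + s.done.card := by
    rw [Finset.card_union_of_disjoint hdisj, List.toFinset_card_of_nodup s.isPath.support_nodup,
      Walk.length_support]
  rw [unexplored, Finset.card_compl, hunion]
  have := hunion ▸ Finset.card_le_univ (s.path.support.toFinset ∪ s.done)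
  omega

lemma exists_push {w : V} (hw : w ∈ s.unexplored) (hadj : G.Adj w s.start) :
    ∃ t : DfsState G, t.done = s.done ∧ t.potential = s.potential + 1 := by
  rw [mem_unexplored] at hw
  refine ⟨⟨w, s.bottom, .cons hadj s.path, s.isPath.cons hw.1, s.done, ?_, ?_⟩, rfl, ?_⟩
  · intro x hx
    simpa [Walk.support_cons, not_or] using ⟨fun h ↦ hw.2 (h ▸ hx), s.notMem_support x hx⟩
  · intro a ha b hab
    simpa [Walk.support_cons] using (s.adj_done a ha b hab).imp_right Or.inr
  · simp only [potential, Walk.length_cons]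
    ring

lemma adj_insert_start (hclosed : ∀ w, G.Adj s.start w → w ∉ s.unexplored) {a b : V}
    (ha : a ∈ insert s.start s.done) (hab : G.Adj a b) :
    b ∈ insert s.start s.done ∨ b ∈ s.path.support.tail := by
  have hb : b ∈ s.done ∨ b ∈ s.path.support := by
    rcases Finset.mem_insert.1 ha with rfl | ha
    · have := hclosed b hab
      rw [mem_unexplored] at this
      tauto
    · exact s.adj_done a ha b hab
  rw [← Walk.cons_tail_support, List.mem_cons] at hb
  rw [Finset.mem_insert]
  tauto

lemma exists_pop {y : V} {h : G.Adj s.start y} {Q : G.Walk y s.bottom}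
    (hs : s.path = .cons h Q) (hclosed : ∀ w, G.Adj s.start w → w ∉ s.unexplored) :
    ∃ t : DfsState G, t.done.card = s.done.card + 1 ∧ t.potential = s.potential + 1 := by
  have hpath : Q.IsPath ∧ s.start ∉ Q.support := (Walk.cons_isPath_iff h Q).1 (hs ▸ s.isPath)
  have htail : s.path.support.tail = Q.support := by simp [hs]
  have hstart : s.start ∉ s.done := fun h ↦ s.notMem_support _ h s.path.start_mem_support
  refine ⟨⟨y, s.bottom, Q, hpath.1, insert s.start s.done, ?_, ?_⟩, ?_, ?_⟩
  · intro x hx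
    rcases Finset.mem_insert.1 hx with rfl | hx
    · exact hpath.2
    · exact fun hxQ ↦ s.notMem_support x hx (by simp [hs, hxQ])
  · intro a ha b hab
    simpa only [htail] using s.adj_insert_start hclosed ha hab
  · exact Finset.card_insert_of_notMem hstart
  · simp only [potential, Finset.card_insert_of_notMem hstart, hs, Walk.length_cons]
    ring

lemma exists_restart (hs : s.path.Nil) (hclosed : ∀ w, G.Adj s.start w → w ∉ s.unexplored)
    {w : V} (hw : w ∈ s.unexplored) :
    ∃ t : DfsState G, t.done.card = s.done.card + 1 ∧ t.potential = s.potential + 2 := by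
  rw [mem_unexplored] at hw
  have htail : s.path.support.tail = [] := by simp [Walk.nil_iff_support_eq.1 hs]
  have hstart : s.start ∉ s.done := fun h ↦ s.notMem_support _ h s.path.start_mem_support
  refine ⟨⟨w, w, .nil, .nil, insert s.start s.done, ?_, ?_⟩, ?_, ?_⟩
  · intro x hx
    simp only [Walk.support_nil, List.mem_singleton]
    rintro rfl
    rcases Finset.mem_insert.1 hx with rfl | hx
    · exact hw.1 s.path.start_mem_support
    · exact hw.2 hx
  · intro a ha b hab
    left
    simpa only [htail, List.not_mem_nil, or_false] using s.adj_insert_start hclosed ha hab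
  · exact Finset.card_insert_of_notMem hstart
  · simp only [potential, Finset.card_insert_of_notMem hstart, Walk.length_eq_zero_iff.2 hs,
      Walk.length_nil]
    ring

lemma exists_potential_lt (hW : s.unexplored.Nonempty) :
    ∃ t : DfsState G, t.done.card ≤ s.done.card + 1 ∧ s.potential < t.potential := by
  by_cases hext : ∃ w ∈ s.unexplored, G.Adj w s.start
  · obtain ⟨w, hw, hadj⟩ := hext
    obtain ⟨t, hdone, hpot⟩ := s.exists_push hw hadj
    exact ⟨t, hdone ▸ Nat.le_succ _, by omega⟩
  have hclosed : ∀ w, G.Adj s.start w → w ∉ s.unexplored :=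
    fun w hadj hw ↦ hext ⟨w, hw, hadj.symm⟩
  by_cases hnil : s.path.Nil
  · obtain ⟨w, hw⟩ := hW
    obtain ⟨t, hdone, hpot⟩ := s.exists_restart hnil hclosed hw
    exact ⟨t, hdone.le, by omega⟩
  · obtain ⟨y, h, Q, hs⟩ := Walk.not_nil_iff.1 hnil
    obtain ⟨t, hdone, hpot⟩ := s.exists_pop hs hclosed
    exact ⟨t, hdone.le, by omega⟩

lemma potential_le_two_mul_card : s.potential ≤ 2 * Fintype.card V := by
  have := s.card_unexplored_add_card_done
  unfold potential
  omega

lemma exists_forall_potential_le [Nonempty V] (m : ℕ) :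
    ∃ s : DfsState G, s.done.card ≤ m ∧
      ∀ t : DfsState G, t.done.card ≤ m → t.potential ≤ s.potential := by
  set K := {k | ∃ s : DfsState G, s.done.card ≤ m ∧ s.potential = k}
  have hne : K.Nonempty := ⟨_, initial (Classical.arbitrary V), by simp [initial], rfl⟩
  have hbdd : BddAbove K := ⟨2 * Fintype.card V, by
    rintro _ ⟨t, -, rfl⟩
    exact t.potential_le_two_mul_card⟩
  obtain ⟨s, hs, hmax⟩ := Nat.sSup_mem hne hbdd
  exact ⟨s, hs, fun t ht ↦ hmax ▸ le_csSup hbdd ⟨t, ht, rfl⟩⟩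

theorem _root_.IsJoined.card_unexplored_lt {m : ℕ} (hG : IsJoined G m) (hs : s.done.card = m) :
    s.unexplored.card < m := by
  refine hG.card_lt_of_forall_not_adj ?_ hs fun a ha b hb hab ↦ ?_
  · exact Finset.disjoint_right.2 fun x hx ↦ ((s.mem_unexplored).1 hx).2
  · rw [mem_unexplored] at hb
    rcases s.adj_done a ha b hab with h | h
    exacts [hb.2 h, hb.1 h]

end DfsState

/-- Lemma 3.8: every `m`-joined graph contains a path of length at least
`|G| − 2m`. -/
theorem joined_long_path (m : ℕ) (V : Type) [Fintype V] [Nonempty V]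
    (G : SimpleGraph V) (hG : IsJoined G m) :
    ∃ (u v : V) (P : G.Walk u v), P.IsPath ∧
      (Fintype.card V : ℤ) - 2 * (m : ℤ) ≤ (P.length : ℤ) := by
  classical
  obtain ⟨s, hsm, hmax⟩ := DfsState.exists_forall_potential_le (G := G) m
  have hcount := s.card_unexplored_add_card_done
  have hsmall : s.unexplored.card + s.done.card < 2 * m := by
    rcases hsm.lt_or_eq with hlt | heq
    · have hW : s.unexplored = ∅ := by
        by_contra hW
        obtain ⟨t, htm, hlt'⟩ := s.exists_potential_lt (Finset.nonempty_iff_ne_empty.2 hW)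
        exact (hmax t (by omega)).not_gt hlt'
      rw [hW, Finset.card_empty]
      omega
    · have := hG.card_unexplored_lt s heq
      omega
  exact ⟨_, _, s.path, s.isPath, by omega⟩
end

section
/- Let m ∈ ℕ and let G be an m-joined graph. Let U, Z ⊆ V(G) and let v, v' be two distinct vertices of G. If d(v,U) > |Z| + 4m and d(v',U) > |Z| + 4m, then G contains a path of length 3 from v to v' whose two internal vertices lie in U \ Z. -/
open SimpleGraph

/-- Property (C) in the proof of Theorem 1.4: if `G` is `m`-joined, `v ≠ v'` and
`d(v,U), d(v',U) > |Z| + 4m`, then there is a path of length `3` from `v` to `v'`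
whose two internal vertices lie in `U \ Z`. -/
theorem connecting_path_of_length_three (m : ℕ)
    (V : Type) [Fintype V] [DecidableEq V] (G : SimpleGraph V) [DecidableRel G.Adj]
    (hG : IsJoined G m) (U Z : Finset V) (v v' : V) (hvv' : v ≠ v')
    (hv : Z.card + 4 * m < ((G.neighborFinset v) ∩ U).card)
    (hv' : Z.card + 4 * m < ((G.neighborFinset v') ∩ U).card) :
    ∃ P : G.Walk v v', P.IsPath ∧ P.length = 3 ∧
      ∀ w ∈ P.support, w ≠ v → w ≠ v' → w ∈ U \ Z := by
  rcases Nat.eq_zero_or_pos m with hm | hm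
  · subst hm
    obtain ⟨a, ha, -⟩ := hG ∅ ∅ (by simp) (by simp) (by simp)
    simp at ha
  set A : Finset V := ((G.neighborFinset v ∩ U) \ Z) \ {v, v'} with hA
  set B : Finset V := ((G.neighborFinset v' ∩ U) \ Z) \ {v, v'} with hB
  have hAcard : 2 * m ≤ A.card := by
    have h1 : (G.neighborFinset v ∩ U).card - Z.card ≤ ((G.neighborFinset v ∩ U) \ Z).card :=
      Finset.le_card_sdiff _ _
    have h2 : ((G.neighborFinset v ∩ U) \ Z).card - ({v, v'} : Finset V).card ≤ A.card :=
      Finset.le_card_sdiff _ _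
    have h3 : ({v, v'} : Finset V).card ≤ 2 := Finset.card_insert_le _ _ |>.trans (by simp)
    omega
  have hBcard : 2 * m ≤ B.card := by
    have h1 : (G.neighborFinset v' ∩ U).card - Z.card ≤ ((G.neighborFinset v' ∩ U) \ Z).card :=
      Finset.le_card_sdiff _ _
    have h2 : ((G.neighborFinset v' ∩ U) \ Z).card - ({v, v'} : Finset V).card ≤ B.card :=
      Finset.le_card_sdiff _ _
    have h3 : ({v, v'} : Finset V).card ≤ 2 := Finset.card_insert_le _ _ |>.trans (by simp)
    omega
  obtain ⟨T, hTB, hTcard⟩ := Finset.exists_subset_card_eq (s := B) (n := m) (by omega)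
  have hATcard : m ≤ (A \ T).card := by
    have := Finset.le_card_sdiff T A
    omega
  obtain ⟨S, hSAT, hScard⟩ := Finset.exists_subset_card_eq (s := A \ T) hATcard
  have hdisj : Disjoint S T := (Finset.sdiff_disjoint).mono_left hSAT
  obtain ⟨a, haS, b, hbT, hab⟩ := hG S T hdisj hScard hTcard
  have haA : a ∈ A := (Finset.mem_sdiff.mp (hSAT haS)).1
  have hbB : b ∈ B := hTB hbT
  simp only [hA, Finset.mem_sdiff, Finset.mem_inter, mem_neighborFinset,
    Finset.mem_insert, Finset.mem_singleton, not_or] at haA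
  simp only [hB, Finset.mem_sdiff, Finset.mem_inter, mem_neighborFinset,
    Finset.mem_insert, Finset.mem_singleton, not_or] at hbB
  obtain ⟨⟨⟨hva, haU⟩, haZ⟩, hav, hav'⟩ := haA
  obtain ⟨⟨⟨hv'b, hbU⟩, hbZ⟩, hbv, hbv'⟩ := hbB
  have habne : a ≠ b := fun h => (Finset.disjoint_left.mp hdisj haS) (h ▸ hbT)
  refine ⟨Walk.cons hva (Walk.cons hab (Walk.cons hv'b.symm Walk.nil)), ?_, by simp, ?_⟩
  · rw [Walk.isPath_def]
    simp [hvv', hav, hav', hbv, hbv', habne, Ne.symm hav, Ne.symm hbv, Ne.symm habne,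
      fun h : v = v' => hvv' h]
  · intro w hw hwv hwv'
    simp only [Walk.support_cons, Walk.support_nil, List.mem_cons, List.mem_singleton, List.not_mem_nil, or_false] at hw
    rcases hw with rfl | rfl | rfl | rfl
    · exact absurd rfl hwv
    · exact Finset.mem_sdiff.mpr ⟨haU, haZ⟩
    · exact Finset.mem_sdiff.mpr ⟨hbU, hbZ⟩
    · exact absurd rfl hwv'
end

section
/- Let m, k ∈ ℕ and let G be an m-joined graph. Let v ∈ V(G) and let Z ⊆ V(G) \ {v}. If d(v) ≥ |Z| + 2m + 2k, then there exist k pairwise disjoint edges of G whose endpoints all lie in N(v) \ Z; in particular, G contains k triangles through v that pairwise intersect only in v and avoid Z \ {v}. -/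
/-!
Any `2m` vertices of an `m`-joined graph span an edge: split them into two halves of size `m`.
Since `d(v) - |Z| ≥ 2m + 2k`, we can greedily pick an edge inside `N(v) \ Z`, delete its two
endpoints and repeat `k` times, each time leaving at least `2m` vertices.
-/

open SimpleGraph

open Finset Function

theorem Fin.injective_sumElim_cons {α : Type*} {n : ℕ} {a b : α} {x y : Fin n → α}
    (hab : a ≠ b) (hax : a ∉ Set.range x) (hay : a ∉ Set.range y)
    (hbx : b ∉ Set.range x) (hby : b ∉ Set.range y) (hxy : Injective (Sum.elim x y)) :
    Injective (Sum.elim (Fin.cons a x : Fin (n + 1) → α) (Fin.cons b y)) := by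
  refine (Fin.cons_injective_of_injective hax (hxy.comp Sum.inl_injective)).sumElim
    (Fin.cons_injective_of_injective hby (hxy.comp Sum.inr_injective)) fun i j => ?_
  cases i using Fin.cases <;> cases j using Fin.cases
  · exact hab
  · exact fun h => hay ⟨_, h.symm⟩
  · exact fun h => hbx ⟨_, h⟩
  · exact fun h => Sum.inl_ne_inr (hxy h)

namespace IsJoined

variable {V : Type*} [DecidableEq V] {G : SimpleGraph V} {m : ℕ}

theorem exists_adj_of_two_mul_le_card (hG : IsJoined G m) {S : Finset V} (hS : 2 * m ≤ #S) :
    ∃ a ∈ S, ∃ b ∈ S, G.Adj a b := by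
  obtain ⟨A, hAS, hA⟩ := exists_subset_card_eq (show m ≤ #S by omega)
  obtain ⟨B, hBS, hB⟩ := exists_subset_card_eq (show m ≤ #(S \ A) by
    rw [card_sdiff_of_subset hAS]; omega)
  obtain ⟨a, ha, b, hb, hab⟩ := hG A B (disjoint_of_subset_right hBS sdiff_disjoint.symm) hA hB
  exact ⟨a, hAS ha, b, (mem_sdiff.1 (hBS hb)).1, hab⟩

theorem exists_disjoint_edges (hG : IsJoined G m) {k : ℕ} {S : Finset V}
    (hS : 2 * m + 2 * k ≤ #S) :
    ∃ x y : Fin k → V,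
      (∀ i, G.Adj (x i) (y i)) ∧ (∀ i, x i ∈ S) ∧ (∀ i, y i ∈ S) ∧
      Injective (Sum.elim x y) := by
  induction k generalizing S with
  | zero => exact ⟨Fin.elim0, Fin.elim0, nofun, nofun, nofun, injective_of_subsingleton _⟩
  | succ k ih =>
    obtain ⟨a, haS, b, hbS, hab⟩ := hG.exists_adj_of_two_mul_le_card (S := S) (by omega)
    have hS' : 2 * m + 2 * k ≤ #(S \ {a, b}) := by
      have := le_card_sdiff {a, b} S
      have := card_le_two (a := a) (b := b)
      omega
    obtain ⟨x, y, hxy, hx, hy, hinj⟩ := ih hS'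
    have notMem_range {z : Fin k → V} (hz : ∀ i, z i ∈ S \ {a, b}) {c : V}
        (hc : c ∈ ({a, b} : Finset V)) : c ∉ Set.range z :=
      fun ⟨i, hi⟩ => (mem_sdiff.1 (hz i)).2 (hi ▸ hc)
    refine ⟨Fin.cons a x, Fin.cons b y, Fin.cases hab hxy,
      Fin.cases haS fun i => (mem_sdiff.1 (hx i)).1, Fin.cases hbS fun i => (mem_sdiff.1 (hy i)).1,
      Fin.injective_sumElim_cons hab.ne ?_ ?_ ?_ ?_ hinj⟩ <;>
      apply notMem_range <;> simp [*]

end IsJoined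

theorem disjoint_edges_in_neighbourhood_general (m k : ℕ)
    (V : Type) [Fintype V] [DecidableEq V] (G : SimpleGraph V) [DecidableRel G.Adj]
    (hG : IsJoined G m) (v : V) (Z : Finset V)
    (hd : Z.card + 2 * m + 2 * k ≤ G.degree v) :
    ∃ x y : Fin k → V,
      (∀ i, G.Adj (x i) (y i)) ∧
      (∀ i, x i ∈ G.neighborFinset v \ Z) ∧
      (∀ i, y i ∈ G.neighborFinset v \ Z) ∧
      Function.Injective (Sum.elim x y : Fin k ⊕ Fin k → V) := by
  apply hG.exists_disjoint_edges
  have := le_card_sdiff Z (G.neighborFinset v)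
  rw [card_neighborFinset_eq_degree] at this
  omega

/-- Claim 3.9-style greedy step: if `G` is `m`-joined, `v ∉ Z` and
`d(v) ≥ |Z| + 2m + 2k`, then there are `k` pairwise disjoint edges whose
endpoints all lie in `N(v) \ Z`; equivalently, `k` triangles through `v`
pairwise intersecting only in `v` and avoiding `Z`. -/
theorem disjoint_edges_in_neighbourhood (m k : ℕ)
    (V : Type) [Fintype V] [DecidableEq V] (G : SimpleGraph V) [DecidableRel G.Adj]
    (hG : IsJoined G m) (v : V) (Z : Finset V) (hvZ : v ∉ Z)
    (hd : Z.card + 2 * m + 2 * k ≤ G.degree v) :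
    ∃ x y : Fin k → V,
      (∀ i, G.Adj (x i) (y i)) ∧
      (∀ i, x i ∈ G.neighborFinset v \ Z) ∧
      (∀ i, y i ∈ G.neighborFinset v \ Z) ∧
      Function.Injective (Sum.elim x y : Fin k ⊕ Fin k → V) :=
  disjoint_edges_in_neighbourhood_general m k V G hG v Z hd
end
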